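/- arXiv:1703.05684 — 14 statements merged into one kernel-verified Lean document; each statement's English description precedes it below -/
import Mathlib

section
/- Let (G,L) be a minimal list-obstruction with L(v) ⊆ {1,2,3} and |L(v)| ≤ 2 for every vertex v, and suppose every vertex has a nonempty list. Then the number of vertices v with |L(v)| = 1 is at most 2. -/
def ListColorableOn {V : Type*} (G : SimpleGraph V) (L : V → Finset ℕ) (S : Set V) : Prop :=
  ∃ c : V → ℕ, (∀ v ∈ S, c v ∈ L v) ∧ ∀ u ∈ S, ∀ w ∈ S, G.Adj u w → c u ≠ c w

def MinimalListObstruction {V : Type*} (G : SimpleGraph V) (L : V → Finset ℕ) : Prop :=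
  ¬ ListColorableOn G L Set.univ ∧ ∀ S : Set V, S ≠ Set.univ → ListColorableOn G L S

/-- Forcing relation: starting from vertex `z` forced to color `g`, propagate forced colors. -/
inductive Reach {V : Type*} (G : SimpleGraph V) (L : V → Finset ℕ) (z : V) (g : ℕ) :
    V → ℕ → Prop
  | base : Reach G L z g z g
  | step {u b v β} : Reach G L z g u b → G.Adj u v → b ∈ L v → β ∈ L v → β ≠ b →
      Reach G L z g v β

lemma reach_mem {V : Type*} {G : SimpleGraph V} {L : V → Finset ℕ} {z : V} {g : ℕ}
    (hLz : L z = {g}) {v : V} {b : ℕ} (h : Reach G L z g v b) : b ∈ L v := by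
  cases h with
  | base => rw [hLz]; exact Finset.mem_singleton_self g
  | step _ _ _ hβ _ => exact hβ

lemma reach_forced {V : Type*} {G : SimpleGraph V} {L : V → Finset ℕ}
    (hsize : ∀ v, (L v).card ≤ 2) {z : V} {g : ℕ} (hLz : L z = {g}) (S : Set V)
    (hS : ∀ v b, Reach G L z g v b → v ∈ S) (d : V → ℕ)
    (hd1 : ∀ v ∈ S, d v ∈ L v) (hd2 : ∀ u ∈ S, ∀ w ∈ S, G.Adj u w → d u ≠ d w) :
    ∀ v b, Reach G L z g v b → d v = b := by
  intro v b h
  induction h with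
  | base =>
      have h1 := hd1 z (hS z g Reach.base)
      rw [hLz, Finset.mem_singleton] at h1
      exact h1
  | @step u b' v' β hub hadj hb hβ hne ih =>
      have hu : u ∈ S := hS u b' hub
      have hv : v' ∈ S := hS v' β (Reach.step hub hadj hb hβ hne)
      have hdv := hd1 v' hv
      have hsub2 : ({b', β} : Finset ℕ) ⊆ L v' := by
        intro x hx
        rcases Finset.mem_insert.mp hx with rfl | hx
        · exact hb
        · rw [Finset.mem_singleton] at hx; subst hx; exact hβ
      have hcard : (L v').card ≤ ({b', β} : Finset ℕ).card := by
        rw [Finset.card_insert_of_notMem (by simpa using hne.symm), Finset.card_singleton]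
        exact hsize v'
      have hLv : ({b', β} : Finset ℕ) = L v' := Finset.eq_of_subset_of_card_le hsub2 hcard
      rw [← hLv] at hdv
      rcases Finset.mem_insert.mp hdv with h1 | h1
      · exact absurd (ih ▸ h1 : d v' = d u) (hd2 u hu v' hv hadj).symm
      · exact Finset.mem_singleton.mp h1

theorem stmt_1 {V : Type*} [Fintype V] (G : SimpleGraph V) (L : V → Finset ℕ)
    (hsub : ∀ v, L v ⊆ ({1, 2, 3} : Finset ℕ)) (hsize : ∀ v, (L v).card ≤ 2)
    (hne : ∀ v, (L v).Nonempty)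
    (hmin : MinimalListObstruction G L) :
    {v : V | (L v).card = 1}.ncard ≤ 2 := by
  by_contra hcon
  push_neg at hcon
  -- extract three distinct singleton vertices x, y, z
  classical
  have hfin : {v : V | (L v).card = 1}.Finite := Set.toFinite _
  rw [Set.ncard_eq_toFinset_card' _] at hcon
  obtain ⟨x, y, z, hx, hy, hz, hxy, hxz, hyz⟩ := Finset.two_lt_card_iff.mp hcon
  rw [Set.mem_toFinset] at hx hy hz
  simp only [Set.mem_setOf_eq] at hx hy hz
  obtain ⟨g, hLz⟩ := Finset.card_eq_one.mp hz
  -- a coloring of V \ {z}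
  have hSne : (Set.univ \ {z} : Set V) ≠ Set.univ := by
    intro h
    have : z ∈ (Set.univ \ {z} : Set V) := by rw [h]; trivial
    exact this.2 rfl
  obtain ⟨c, hc1, hc2⟩ := hmin.2 _ hSne
  have hc1' : ∀ v, v ≠ z → c v ∈ L v := fun v hv => hc1 v ⟨Set.mem_univ v, hv⟩
  have hc2' : ∀ u w, u ≠ z → w ≠ z → G.Adj u w → c u ≠ c w := fun u w hu hw hadj =>
    hc2 u ⟨Set.mem_univ u, hu⟩ w ⟨Set.mem_univ w, hw⟩ hadj
  -- helper: a reached vertex other than z has a 2-list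
  have hstepcard : ∀ s, s ≠ z → (∃ b, Reach G L z g s b) → (L s).card ≠ 1 := by
    rintro s hs ⟨b, hb⟩
    cases hb with
    | base => exact absurd rfl hs
    | @step u b' _ _ hub hadj hb' hβ hne' =>
        intro h1
        have hsub2 : ({b', b} : Finset ℕ) ⊆ L s := by
          intro t ht
          rcases Finset.mem_insert.mp ht with rfl | ht
          · exact hb'
          · rw [Finset.mem_singleton] at ht; subst ht; exact hβ
        have : ({b', b} : Finset ℕ).card ≤ 1 := h1 ▸ Finset.card_le_card hsub2
        rw [Finset.card_insert_of_notMem (by simpa using hne'.symm),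
          Finset.card_singleton] at this
        omega
  by_cases hP2 : ∃ v b b', Reach G L z g v b ∧ Reach G L z g v b' ∧ b ≠ b'
  · -- two different forced colors at one vertex: the reached set is uncolorable
    obtain ⟨v, b, b', hb, hb', hbb'⟩ := hP2
    set H : Set V := {v | ∃ b, Reach G L z g v b} with hH
    have hHuncol : ¬ ListColorableOn G L H := by
      rintro ⟨d, hd1, hd2⟩
      have hf := reach_forced hsize hLz H (fun v b h => ⟨b, h⟩) d hd1 hd2
      exact hbb' ((hf v b hb).symm.trans (hf v b' hb'))
    have hHuniv : H = Set.univ := by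
      by_contra hne'
      exact hHuncol (hmin.2 H hne')
    have hxH : x ∈ H := hHuniv ▸ Set.mem_univ x
    exact hstepcard x hxz hxH hx
  · by_cases hP1 : ∃ u b w, Reach G L z g u b ∧ G.Adj u w ∧ L w = {b}
    · -- a reached vertex forces a neighboring singleton: reached set plus w is uncolorable
      obtain ⟨u, b, w, hu, hadj, hLw⟩ := hP1
      set H : Set V := insert w {v | ∃ b, Reach G L z g v b} with hH
      have hHuncol : ¬ ListColorableOn G L H := by
        rintro ⟨d, hd1, hd2⟩
        have hf := reach_forced hsize hLz H (fun v b h => Set.mem_insert_of_mem w ⟨b, h⟩)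
          d hd1 hd2
        have hdu : d u = b := hf u b hu
        have hdw : d w = b := by
          have := hd1 w (Set.mem_insert w _)
          rw [hLw, Finset.mem_singleton] at this
          exact this
        exact hd2 u (Set.mem_insert_of_mem w ⟨b, hu⟩) w (Set.mem_insert w _) hadj
          (hdu.trans hdw.symm)
      have hHuniv : H = Set.univ := by
        by_contra hne'
        exact hHuncol (hmin.2 H hne')
      -- one of x, y differs from w
      rcases ne_or_eq x w with hxw | rfl
      · have hxH : x ∈ H := hHuniv ▸ Set.mem_univ x
        rcases hxH with h1 | h1
        · exact hxw h1
        · exact hstepcard x hxz h1 hx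
      · have hyH : y ∈ H := hHuniv ▸ Set.mem_univ y
        rcases hyH with h1 | h1
        · exact hxy h1.symm
        · exact hstepcard y hyz h1 hy
    · -- no contradiction from forcing: build a full coloring, contradiction
      set d : V → ℕ := fun v => if h : ∃ b, Reach G L z g v b then h.choose else c v with hd
      have hreach_val : ∀ v (h : ∃ b, Reach G L z g v b), d v = h.choose := by
        intro v h
        simp only [hd, dif_pos h]
      have hreach_d : ∀ v, (∃ b, Reach G L z g v b) → Reach G L z g v (d v) := by
        intro v h
        rw [hreach_val v h]
        exact h.choose_spec
      have hnoreach : ∀ v, ¬ (∃ b, Reach G L z g v b) → d v = c v ∧ v ≠ z := by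
        intro v h
        constructor
        · simp only [hd, dif_neg h]
        · rintro rfl
          exact h ⟨g, Reach.base⟩
      have hmem : ∀ v, d v ∈ L v := by
        intro v
        by_cases h : ∃ b, Reach G L z g v b
        · exact reach_mem hLz (hreach_d v h)
        · rw [(hnoreach v h).1]; exact hc1' v (hnoreach v h).2
      -- key: if u is reached and adjacent w has d w = d u, contradiction
      have haux : ∀ u w, G.Adj u w → (∃ b, Reach G L z g u b) → d u = d w → False := by
        intro u w hadj hu heq
        have hru : Reach G L z g u (d u) := hreach_d u hu
        have hbw : d u ∈ L w := heq ▸ hmem w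
        by_cases hex : ∃ β ∈ L w, β ≠ d u
        · obtain ⟨β, hβ, hβne⟩ := hex
          have hrw : Reach G L z g w β := Reach.step hru hadj hbw hβ hβne
          have hrw2 : Reach G L z g w (d w) := hreach_d w ⟨β, hrw⟩
          rw [← heq] at hrw2
          exact hP2 ⟨w, β, d u, hrw, hrw2, hβne⟩
        · push_neg at hex
          have hLw : L w = {d u} := Finset.eq_singleton_iff_unique_mem.mpr ⟨hbw, hex⟩
          exact hP1 ⟨u, d u, w, hru, hadj, hLw⟩
      have hproper : ∀ u w, G.Adj u w → d u ≠ d w := by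
        intro u w hadj heq
        by_cases hu : ∃ b, Reach G L z g u b
        · exact haux u w hadj hu heq
        · by_cases hw : ∃ b, Reach G L z g w b
          · exact haux w u hadj.symm hw heq.symm
          · obtain ⟨hdu, huz⟩ := hnoreach u hu
            obtain ⟨hdw, hwz⟩ := hnoreach w hw
            rw [hdu, hdw] at heq
            exact hc2' u w huz hwz hadj heq
      exact hmin.1 ⟨d, fun v _ => hmem v, fun u _ w _ hadj => hproper u w hadj⟩
end

section
/- Let (G,L) be a minimal list-obstruction with lists L(v) ⊆ {1,2,3}, let A be a stable (independent) set in G, let U be the set of vertices of V(G) \ A that are not mixed on A (i.e., each such vertex is either complete or anticomplete to A), and let k = |V(G) \ (A ∪ U)|. Then |A| ≤ 7 · 2^k. -/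
theorem stmt_3 {V : Type*} [Fintype V] (G : SimpleGraph V) (L : V → Finset ℕ)
    (hsub : ∀ v, L v ⊆ ({1, 2, 3} : Finset ℕ))
    (hmin : MinimalListObstruction G L)
    (A : Set V) (hstable : ∀ a ∈ A, ∀ b ∈ A, ¬ G.Adj a b)
    (U : Set V)
    (hU : U = {w | w ∉ A ∧ ¬ ((∃ a ∈ A, G.Adj w a) ∧ (∃ a ∈ A, ¬ G.Adj w a))})
    (k : ℕ) (hk : k = (Set.univ \ (A ∪ U)).ncard) :
    A.ncard ≤ 7 * 2 ^ k := by
  classical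
  have h2k : 1 ≤ 2 ^ k := Nat.one_le_two_pow
  by_cases hV : Subsingleton V
  · have h1 : A.ncard ≤ (Set.univ : Set V).ncard :=
      Set.ncard_le_ncard (Set.subset_univ A) Set.finite_univ
    have h2 : (Set.univ : Set V).ncard = Fintype.card V := by
      simp [Set.ncard_univ, Nat.card_eq_fintype_card]
    have h3 : Fintype.card V ≤ 1 := Fintype.card_le_one_iff_subsingleton.mpr hV
    have : A.ncard ≤ 1 := by omega
    calc A.ncard ≤ 1 := this
      _ ≤ 7 * 2 ^ k := by nlinarith
  have hnt : Nontrivial V := not_subsingleton_iff_nontrivial.mp hV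
  set R : Set V := Set.univ \ (A ∪ U) with hR
  -- every vertex of A has a nonempty list
  have hLne : ∀ a ∈ A, (L a).Nonempty := by
    intro a _
    rw [Finset.nonempty_iff_ne_empty]
    intro hLa
    obtain ⟨b, hb⟩ := exists_ne a
    have hS : (Set.univ \ {b} : Set V) ≠ Set.univ := by
      intro h
      have : b ∈ (Set.univ \ {b} : Set V) := by rw [h]; trivial
      simp at this
    obtain ⟨c, hc1, _⟩ := hmin.2 _ hS
    have : c a ∈ L a := hc1 a (by simp [hb.symm])
    simp [hLa] at this
  -- the encoding map
  set g : V → Finset ℕ × Finset V :=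
    fun v => (L v, R.toFinset.filter (fun r => G.Adj v r)) with hg
  have hinj : Set.InjOn g A := by
    intro a ha b hb hab
    by_contra hne
    have hS : (Set.univ \ {b} : Set V) ≠ Set.univ := by
      intro h
      have : b ∈ (Set.univ \ {b} : Set V) := by rw [h]; trivial
      simp at this
    obtain ⟨c, hc1, hc2⟩ := hmin.2 _ hS
    have haS : a ∈ (Set.univ \ {b} : Set V) := by simp [hne]
    have hLab : L a = L b := congrArg Prod.fst hab
    have key : ∀ w, w ≠ b → G.Adj b w → G.Adj a w := by
      intro w hw hbw
      have hwA : w ∉ A := fun hwA => hstable b hb w hwA hbw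
      by_cases hwR : w ∈ R
      · have h1 : w ∈ R.toFinset.filter (fun r => G.Adj b r) := by
          simp [Set.mem_toFinset, hwR, hbw]
        have h2 : (g a).2 = (g b).2 := congrArg Prod.snd hab
        have h3 : w ∈ R.toFinset.filter (fun r => G.Adj a r) := by
          have : w ∈ (g a).2 := by rw [h2]; exact h1
          simpa [hg] using this
        simp at h3
        exact h3.2
      · have hwAU : w ∈ A ∪ U := by
          by_contra h
          exact hwR ⟨Set.mem_univ w, h⟩
        have hwU : w ∈ U := hwAU.resolve_left hwA
        rw [hU] at hwU
        obtain ⟨_, hmix⟩ := hwU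
        push_neg at hmix
        have hwb : G.Adj w b := hbw.symm
        have := hmix ⟨b, hb, hwb⟩ a ha
        exact this.symm
    apply hmin.1
    refine ⟨Function.update c b (c a), ?_, ?_⟩
    · intro v _
      by_cases hv : v = b
      · subst hv
        rw [Function.update_self, ← hLab]
        exact hc1 a haS
      · rw [Function.update_of_ne hv]
        exact hc1 v (by simp [hv])
    · intro u _ w _ huw
      by_cases hu : u = b <;> by_cases hw : w = b
      · exact absurd (hu ▸ hw ▸ huw) (G.irrefl)
      · subst hu
        rw [Function.update_self, Function.update_of_ne hw]
        exact hc2 a haS w (by simp [hw]) (key w hw huw)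
      · subst hw
        rw [Function.update_self, Function.update_of_ne hu]
        exact (hc2 a haS u (by simp [hu]) (key u hu huw.symm)).symm
      · rw [Function.update_of_ne hu, Function.update_of_ne hw]
        exact hc2 u (by simp [hu]) w (by simp [hw]) huw
  -- counting
  set T : Finset (Finset ℕ × Finset V) :=
    (({1, 2, 3} : Finset ℕ).powerset.erase ∅) ×ˢ R.toFinset.powerset with hT
  have himg : g '' A ⊆ ↑T := by
    rintro _ ⟨a, ha, rfl⟩
    simp only [hT, Finset.coe_product, Set.mem_prod, Finset.mem_coe,
      Finset.mem_erase, Finset.mem_powerset]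
    refine ⟨⟨?_, hsub a⟩, Finset.filter_subset _ _⟩
    exact Finset.nonempty_iff_ne_empty.mp (hLne a ha)
  have hTcard : T.card = 7 * 2 ^ k := by
    rw [hT, Finset.card_product, Finset.card_erase_of_mem (by simp),
      Finset.card_powerset, Finset.card_powerset]
    have h123 : ({1, 2, 3} : Finset ℕ).card = 3 := by decide
    have hRc : R.toFinset.card = k := by
      rw [hk, Set.ncard_eq_toFinset_card']
    rw [h123, hRc]; norm_num
  calc A.ncard = (g '' A).ncard := (Set.ncard_image_of_injOn hinj).symm
    _ ≤ (↑T : Set (Finset ℕ × Finset V)).ncard :=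
        Set.ncard_le_ncard himg (Finset.finite_toSet T)
    _ = T.card := Set.ncard_coe_finset T
    _ = 7 * 2 ^ k := hTcard
end

section
/- Let (G,L) be a list-obstruction, and let X ⊆ V(G) be such that |L(x)| = 1 for every x ∈ X. Let L' be the list system obtained from L by updating with respect to X three times, and let (G',L') be a minimal list-obstruction induced by (G,L'). Then there exists an induced subgraph G'' of G such that (G'',L) is a list-obstruction (hence induces a minimal one) with |V(G'')| ≤ 36·|V(G')|. -/
/-- `(G,L)` restricted to `S` is a minimal list-obstruction. -/
def MinimalListObstructionOn {V : Type*} (G : SimpleGraph V) (L : V → Finset ℕ)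
    (S : Set V) : Prop :=
  ¬ ListColorableOn G L S ∧ ∀ T : Set V, T ⊂ S → ListColorableOn G L T

/-- One round of updating the lists with respect to a set `X` of colored vertices:
each vertex outside `X` loses the colors of its neighbors in `X` whose list is a
singleton, and afterwards every vertex whose list has size at most one joins `X`. -/
def updateOnce {V : Type*} [Fintype V] [DecidableEq V] (G : SimpleGraph V)
    [DecidableRel G.Adj] (p : (V → Finset ℕ) × Finset V) : (V → Finset ℕ) × Finset V :=
  let L' : V → Finset ℕ := fun v =>
    if v ∈ p.2 then p.1 v
    else p.1 v \ (p.2.filter (fun x => G.Adj v x ∧ (p.1 x).card = 1)).biUnion p.1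
  (L', p.2 ∪ Finset.univ.filter (fun v => (L' v).card ≤ 1))

/-!
A colour `k` is deleted from the list of `v` only because some neighbour of `v` has list `{k}`
at that moment. Charging each deletion to such a neighbour, recursively, gives for every vertex
`v` a set `F v ∋ v` such that every proper `L`-colouring of a superset of `F v` colours `v` from
its updated list; hence the union of the `F v` over an obstruction `S'` for `L'` is an obstruction
for `L`. A charged neighbour has lost at most two of its at most three colours, which gives
`|F v| ≤ 1 + (number of colours deleted at v) * (2 ^ i - 1)` after `i` rounds, so at most
`1 + 3 * 7 = 22` vertices per vertex of `S'` after three rounds.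
-/

open Finset

theorem card_sdiff_add_card_sdiff_of_subset {α : Type*} [DecidableEq α] {s t u : Finset α}
    (hts : t ⊆ s) (hut : u ⊆ t) : #(s \ t) + #(t \ u) = #(s \ u) := by
  rw [card_sdiff_of_subset hts, card_sdiff_of_subset hut, card_sdiff_of_subset (hut.trans hts)]
  have := card_le_card hts
  have := card_le_card hut
  omega

section ListObstruction

variable {V : Type*} {G : SimpleGraph V}

def IsListColoringOn (G : SimpleGraph V) (L : V → Finset ℕ) (S : Set V) (c : V → ℕ) : Prop :=
  (∀ v ∈ S, c v ∈ L v) ∧ ∀ u ∈ S, ∀ w ∈ S, G.Adj u w → c u ≠ c w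

def IsNeighborPruning (G : SimpleGraph V) (L₁ L₂ : V → Finset ℕ) : Prop :=
  ∀ v, L₂ v ⊆ L₁ v ∧ ∀ k ∈ L₁ v \ L₂ v, ∃ x, G.Adj v x ∧ L₁ x = {k}

def IsForcingFamily (G : SimpleGraph V) (L L' : V → Finset ℕ) (F : V → Finset V) : Prop :=
  ∀ v, v ∈ F v ∧ ∀ (T : Set V) (c : V → ℕ), ↑(F v) ⊆ T → IsListColoringOn G L T c → c v ∈ L' v

variable {L L' L₁ L₂ : V → Finset ℕ} {F : V → Finset V}

theorem isForcingFamily_singleton : IsForcingFamily G L L fun v => {v} :=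
  fun v => ⟨mem_singleton_self v, fun _ _ hT hc => hc.1 v (hT (by simp))⟩

theorem IsForcingFamily.extend [DecidableEq V] (hF : IsForcingFamily G L L₁ F) (wit : V → ℕ → V)
    (hwit : ∀ v, ∀ k ∈ L₁ v \ L₂ v, G.Adj v (wit v k) ∧ L₁ (wit v k) = {k}) :
    IsForcingFamily G L L₂ fun v => F v ∪ (L₁ v \ L₂ v).biUnion fun k => F (wit v k) := by
  intro v
  refine ⟨mem_union_left _ (hF v).1, fun T c hT hc => ?_⟩
  have hFv : ↑(F v) ⊆ T := fun y hy => hT (by simp [mem_coe.1 hy])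
  have hcv : c v ∈ L₁ v := (hF v).2 T c hFv hc
  by_contra hcv₂
  have hk : c v ∈ L₁ v \ L₂ v := mem_sdiff.2 ⟨hcv, hcv₂⟩
  obtain ⟨hadj, hx⟩ := hwit v (c v) hk
  have hFx : ↑(F (wit v (c v))) ⊆ T := fun y hy =>
    hT (mem_coe.2 (mem_union_right _ (mem_biUnion.2 ⟨c v, hk, mem_coe.1 hy⟩)))
  have hcx : c (wit v (c v)) = c v := by
    simpa [hx] using (hF _).2 T c hFx hc
  exact hc.2 v (hFv (hF v).1) _ (hFx (hF _).1) hadj hcx.symm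

theorem IsForcingFamily.not_listColorableOn_biUnion [DecidableEq V]
    (hF : IsForcingFamily G L L' F) {S : Finset V} (hS : ¬ ListColorableOn G L' ↑S) :
    ¬ ListColorableOn G L ↑(S.biUnion F) := by
  rintro ⟨c, hc⟩
  have hST : (↑S : Set V) ⊆ ↑(S.biUnion F) := fun v hv =>
    mem_coe.2 (mem_biUnion.2 ⟨v, hv, (hF v).1⟩)
  refine hS ⟨c, fun v hv => (hF v).2 _ c ?_ hc, fun u hu w hw => hc.2 u (hST hu) w (hST hw)⟩
  exact coe_subset.2 (subset_biUnion_of_mem F hv)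

theorem IsNeighborPruning.exists_isForcingFamily {m : ℕ} (hP : IsNeighborPruning G L₁ L₂)
    (hL : ∀ v, #(L v) ≤ 3) (hL₁ : ∀ v, L₁ v ⊆ L v) (hF : IsForcingFamily G L L₁ F)
    (hFcard : ∀ v, #(F v) ≤ 1 + #(L v \ L₁ v) * m) :
    ∃ F', IsForcingFamily G L L₂ F' ∧ ∀ v, #(F' v) ≤ 1 + #(L v \ L₂ v) * (2 * m + 1) := by
  classical
  have hwit : ∀ v k, ∃ x, k ∈ L₁ v \ L₂ v → G.Adj v x ∧ L₁ x = {k} := fun v k =>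
    if hk : k ∈ L₁ v \ L₂ v then ((hP v).2 k hk).imp fun _ hx _ => hx else ⟨v, (absurd · hk)⟩
  choose wit hwit using hwit
  refine ⟨_, hF.extend wit hwit, fun v => ?_⟩
  have hwitcard : ∀ k ∈ L₁ v \ L₂ v, #(F (wit v k)) ≤ 2 * m + 1 := by
    intro k hk
    have hx := (hwit v k hk).2
    have hkL : k ∈ L (wit v k) := hL₁ _ (hx ▸ mem_singleton_self k)
    have := hFcard (wit v k)
    rw [hx, sdiff_singleton_eq_erase, card_erase_of_mem hkL] at this
    have := hL (wit v k)
    have : (#(L (wit v k)) - 1) * m ≤ 2 * m := Nat.mul_le_mul_right m (by omega)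
    omega
  have hsplit := card_sdiff_add_card_sdiff_of_subset (hL₁ v) (hP v).1
  calc #(F v ∪ (L₁ v \ L₂ v).biUnion fun k => F (wit v k))
      ≤ #(F v) + #(L₁ v \ L₂ v) * (2 * m + 1) :=
        (card_union_le _ _).trans (Nat.add_le_add_left (card_biUnion_le_card_mul _ _ _ hwitcard) _)
    _ ≤ 1 + #(L v \ L₁ v) * (2 * m + 1) + #(L₁ v \ L₂ v) * (2 * m + 1) := by
        have := hFcard v
        have : #(L v \ L₁ v) * m ≤ #(L v \ L₁ v) * (2 * m + 1) := Nat.mul_le_mul_left _ (by omega)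
        omega
    _ = 1 + #(L v \ L₂ v) * (2 * m + 1) := by rw [← hsplit]; ring

theorem exists_isForcingFamily_of_isNeighborPruning_succ (Ls : ℕ → V → Finset ℕ)
    (hP : ∀ i, IsNeighborPruning G (Ls i) (Ls (i + 1))) (hL : ∀ v, #(Ls 0 v) ≤ 3) (i : ℕ) :
    ∃ F, IsForcingFamily G (Ls 0) (Ls i) F ∧ ∀ v, #(F v) ≤ 1 + #(Ls 0 v \ Ls i v) * mersenne i := by
  have hanti : Antitone Ls := antitone_nat_of_succ_le fun i v => (hP i v).1
  induction i with
  | zero => exact ⟨_, isForcingFamily_singleton, fun v => by simp⟩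
  | succ i ih =>
    obtain ⟨F, hF, hFcard⟩ := ih
    rw [mersenne_succ]
    exact (hP i).exists_isForcingFamily hL (fun v => hanti (Nat.zero_le i) v) hF hFcard

theorem isNeighborPruning_updateOnce [Fintype V] [DecidableEq V] [DecidableRel G.Adj]
    (p : (V → Finset ℕ) × Finset V) : IsNeighborPruning G p.1 (updateOnce G p).1 := by
  intro v
  by_cases hv : v ∈ p.2
  · simp +contextual [updateOnce, hv]
  · simp only [updateOnce, hv, if_false]
    refine ⟨sdiff_subset, fun k hk => ?_⟩
    obtain ⟨hk₁, hk₂⟩ := mem_sdiff.1 hk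
    obtain ⟨x, -, hadj, hcard, hkx⟩ : ∃ x ∈ p.2, G.Adj v x ∧ #(p.1 x) = 1 ∧ k ∈ p.1 x := by
      simpa [hk₁] using hk₂
    exact ⟨x, hadj, eq_singleton_iff_unique_mem.2
      ⟨hkx, fun a ha => card_le_one.1 hcard.le a ha k hkx⟩⟩

end ListObstruction

theorem stmt_4_general {V : Type*} [Fintype V] [DecidableEq V] (G : SimpleGraph V)
    [DecidableRel G.Adj] (L : V → Finset ℕ) (hsub : ∀ v, L v ⊆ ({1, 2, 3} : Finset ℕ))
    (X : Finset V)
    (L' : V → Finset ℕ) (hL' : L' = ((updateOnce G)^[3] (L, X)).1)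
    (S' : Set V) (hmin : MinimalListObstructionOn G L' S') :
    ∃ S'' : Set V, ¬ ListColorableOn G L S'' ∧ S''.ncard ≤ 36 * S'.ncard := by
  classical
  have hL : ∀ v, #(L v) ≤ 3 := fun v => card_le_card (hsub v)
  obtain ⟨F, hF, hFcard⟩ :
      ∃ F, IsForcingFamily G L L' F ∧ ∀ v, #(F v) ≤ 1 + #(L v \ L' v) * mersenne 3 :=
    hL' ▸ exists_isForcingFamily_of_isNeighborPruning_succ (fun i => ((updateOnce G)^[i] (L, X)).1)
      (fun i => by simpa only [Function.iterate_succ_apply'] using isNeighborPruning_updateOnce _)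
      hL 3
  have hobs : ¬ ListColorableOn G L' ↑S'.toFinset := by simpa using hmin.1
  refine ⟨↑(S'.toFinset.biUnion F), hF.not_listColorableOn_biUnion hobs, ?_⟩
  rw [Set.ncard_coe_finset, Set.ncard_eq_toFinset_card']
  refine (card_biUnion_le_card_mul _ _ 36 fun v _ => (hFcard v).trans ?_).trans_eq (mul_comm _ _)
  have := (card_le_card (sdiff_subset (s := L v) (t := L' v))).trans (hL v)
  rw [show mersenne 3 = 7 from rfl]
  omega

theorem stmt_4 {V : Type*} [Fintype V] [DecidableEq V] (G : SimpleGraph V)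
    [DecidableRel G.Adj] (L : V → Finset ℕ) (hsub : ∀ v, L v ⊆ ({1, 2, 3} : Finset ℕ))
    (hobs : ¬ ListColorableOn G L Set.univ)
    (X : Finset V) (hX : ∀ x ∈ X, (L x).card = 1)
    (L' : V → Finset ℕ) (hL' : L' = ((updateOnce G)^[3] (L, X)).1)
    (S' : Set V) (hmin : MinimalListObstructionOn G L' S') :
    ∃ S'' : Set V, ¬ ListColorableOn G L S'' ∧ S''.ncard ≤ 36 * S'.ncard :=
  stmt_4_general G L hsub X L' hL' S' hmin
end

section
/- Let (G,L) be a minimal list-obstruction with lists contained in {1,2,3}. Suppose G has a semi-dominating set A with |A| ≤ t, and suppose that every minimal list-obstruction (G',L') with G' an induced subgraph of G and L' a subsystem of L satisfying |L'(v)| ≤ 2 for all v has at most m vertices. Then |V(G)| ≤ 36 · 3^t · m + t. -/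
lemma s5_eq_singleton {s : Finset ℕ} {a : ℕ} (h1 : s.card = 1) (h2 : a ∈ s) : s = {a} := by
  obtain ⟨b, hb⟩ := Finset.card_eq_one.mp h1
  subst hb
  have h3 := Finset.mem_singleton.mp h2
  subst h3
  rfl

lemma s5_colorable_mono {V : Type*} {G : SimpleGraph V} {L : V → Finset ℕ} {S S' : Set V}
    (hs : S' ⊆ S) (h : ListColorableOn G L S) : ListColorableOn G L S' := by
  obtain ⟨c, h1, h2⟩ := h
  exact ⟨c, fun v hv => h1 v (hs hv), fun u hu w hw => h2 u (hs hu) w (hs hw)⟩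

lemma s5_colorable_sub {V : Type*} {G : SimpleGraph V} {L L' : V → Finset ℕ} {S : Set V}
    (hsub : ∀ v, L' v ⊆ L v) (h : ListColorableOn G L' S) : ListColorableOn G L S := by
  obtain ⟨c, h1, h2⟩ := h
  exact ⟨c, fun v hv => hsub v (h1 v hv), h2⟩

section PK

variable {V : Type*} [Fintype V] [DecidableEq V] (G : SimpleGraph V) [DecidableRel G.Adj]

def s5pk (L : V → Finset ℕ) (A : Finset V) (c : V → ℕ) :
    ℕ → (V → Finset ℕ) × Finset V :=
  fun k => (updateOnce G)^[k] (fun w => if w ∈ A then {c w} else L w, A)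

variable (L : V → Finset ℕ) (A : Finset V) (c : V → ℕ)

lemma s5pk_zero_fst (v : V) : (s5pk G L A c 0).1 v = if v ∈ A then {c v} else L v := rfl

lemma s5pk_zero_snd : (s5pk G L A c 0).2 = A := rfl

lemma s5pk_succ (k : ℕ) : s5pk G L A c (k + 1) = updateOnce G (s5pk G L A c k) :=
  Function.iterate_succ_apply' _ _ _

lemma s5_updateOnce_fst (p : (V → Finset ℕ) × Finset V) (v : V) :
    (updateOnce G p).1 v = if v ∈ p.2 then p.1 v
      else p.1 v \ (p.2.filter (fun x => G.Adj v x ∧ (p.1 x).card = 1)).biUnion p.1 := rfl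

lemma s5_updateOnce_snd (p : (V → Finset ℕ) × Finset V) :
    (updateOnce G p).2 = p.2 ∪ Finset.univ.filter (fun v => ((updateOnce G p).1 v).card ≤ 1) := rfl

lemma s5_updateOnce_fst_subset (p : (V → Finset ℕ) × Finset V) (v : V) :
    (updateOnce G p).1 v ⊆ p.1 v := by
  rw [s5_updateOnce_fst]
  split
  · exact subset_rfl
  · exact Finset.sdiff_subset

lemma s5_lost_witness (p : (V → Finset ℕ) × Finset V) (v : V) (a : ℕ) (ha : a ∈ p.1 v)
    (hb : a ∉ (updateOnce G p).1 v) :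
    ∃ z, z ∈ p.2 ∧ G.Adj v z ∧ (p.1 z).card = 1 ∧ a ∈ p.1 z := by
  rw [s5_updateOnce_fst] at hb
  by_cases h : v ∈ p.2
  · rw [if_pos h] at hb; exact absurd ha hb
  · rw [if_neg h] at hb
    have hmem : a ∈ (p.2.filter (fun x => G.Adj v x ∧ (p.1 x).card = 1)).biUnion p.1 := by
      by_contra hc
      exact hb (Finset.mem_sdiff.mpr ⟨ha, hc⟩)
    obtain ⟨z, hz, haz⟩ := Finset.mem_biUnion.mp hmem
    obtain ⟨hz2, hadj, hcard⟩ := Finset.mem_filter.mp hz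
    exact ⟨z, hz2, hadj, hcard, haz⟩

lemma s5pk_mono (k : ℕ) (v : V) : (s5pk G L A c (k + 1)).1 v ⊆ (s5pk G L A c k).1 v := by
  rw [s5pk_succ]; exact s5_updateOnce_fst_subset G _ v

lemma s5pk_snd_mono (k : ℕ) : (s5pk G L A c k).2 ⊆ (s5pk G L A c (k + 1)).2 := by
  rw [s5pk_succ, s5_updateOnce_snd]; exact Finset.subset_union_left

lemma s5pk_A_snd (k : ℕ) : A ⊆ (s5pk G L A c k).2 := by
  induction k with
  | zero => exact subset_rfl
  | succ k ih => exact ih.trans (s5pk_snd_mono G L A c k)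

lemma s5pk_frozen (k : ℕ) (v : V) (h : v ∈ (s5pk G L A c k).2) :
    (s5pk G L A c (k + 1)).1 v = (s5pk G L A c k).1 v := by
  rw [s5pk_succ, s5_updateOnce_fst, if_pos h]

lemma s5pk_A_fst (k : ℕ) (a : V) (ha : a ∈ A) : (s5pk G L A c k).1 a = {c a} := by
  induction k with
  | zero => rw [s5pk_zero_fst, if_pos ha]
  | succ k ih => rw [s5pk_frozen G L A c k a (s5pk_A_snd G L A c k ha), ih]

lemma s5pk_subL (hc : ∀ a ∈ A, c a ∈ L a) (k : ℕ) (v : V) : (s5pk G L A c k).1 v ⊆ L v := by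
  induction k with
  | zero =>
    rw [s5pk_zero_fst]
    split
    · next h => exact Finset.singleton_subset_iff.mpr (hc v h)
    · exact subset_rfl
  | succ k ih => exact (s5pk_mono G L A c k v).trans ih

lemma s5pk_snd_one (k : ℕ) (v : V) (h : ((s5pk G L A c (k + 1)).1 v).card ≤ 1) :
    v ∈ (s5pk G L A c (k + 1)).2 := by
  rw [s5pk_succ, s5_updateOnce_snd]
  refine Finset.mem_union.mpr (Or.inr (Finset.mem_filter.mpr ⟨Finset.mem_univ _, ?_⟩))
  rw [← s5pk_succ]
  exact h

end PK

section Clean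

variable {V : Type*} [Fintype V] [DecidableEq V] {G : SimpleGraph V} [DecidableRel G.Adj]
  {L : V → Finset ℕ} {A : Finset V} {c d : V → ℕ} {x : V}

lemma s5_clean1 (hxA : x ∉ A) (hdc : ∀ a ∈ A, d a = c a)
    (hd1 : ∀ u, u ≠ x → d u ∈ L u)
    (hd2 : ∀ u w, u ≠ x → w ≠ x → G.Adj u w → d u ≠ d w)
    (u : V) (hu : u ≠ x) : d u ∈ (s5pk G L A c 1).1 u := by
  have h0 : d u ∈ (s5pk G L A c 0).1 u := by
    rw [s5pk_zero_fst]
    split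
    · next h => rw [hdc u h]; exact Finset.mem_singleton_self _
    · exact hd1 u hu
  by_contra hb
  rw [s5pk_succ] at hb
  obtain ⟨z, hz2, hadj, hcard, hmem⟩ := s5_lost_witness G _ u (d u) h0 hb
  rw [s5pk_zero_snd] at hz2
  have hzx : z ≠ x := fun h => hxA (h ▸ hz2)
  rw [s5pk_zero_fst, if_pos hz2] at hmem
  have : d u = c z := Finset.mem_singleton.mp hmem
  rw [← hdc z hz2] at this
  exact hd2 u z hu hzx hadj this

lemma s5_lostB (hxA : x ∉ A) (hdc : ∀ a ∈ A, d a = c a)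
    (hd1 : ∀ u, u ≠ x → d u ∈ L u)
    (hd2 : ∀ u w, u ≠ x → w ≠ x → G.Adj u w → d u ≠ d w)
    (u : V) (hu : u ≠ x) (h2 : d u ∉ (s5pk G L A c 2).1 u) :
    G.Adj u x ∧ (s5pk G L A c 1).1 x = {d u} ∧ (s5pk G L A c 2).1 x = {d u} := by
  have h1 := s5_clean1 hxA hdc hd1 hd2 u hu
  rw [s5pk_succ] at h2
  obtain ⟨z, hz2, hadj, hcard, hmem⟩ := s5_lost_witness G _ u (d u) h1 h2
  by_cases hzx : z = x
  · subst hzx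
    have hsing : (s5pk G L A c 1).1 z = {d u} := s5_eq_singleton hcard hmem
    have hz1 : z ∈ (s5pk G L A c 1).2 := by
      refine s5pk_snd_one G L A c 0 z ?_
      rw [hsing]; simp
    refine ⟨hadj, hsing, ?_⟩
    rw [s5pk_frozen G L A c 1 z hz1, hsing]
  · exfalso
    have hdz := s5_clean1 hxA hdc hd1 hd2 z hzx
    have hsing : (s5pk G L A c 1).1 z = {d u} := s5_eq_singleton hcard hmem
    rw [hsing] at hdz
    exact hd2 u z hu hzx hadj (Finset.mem_singleton.mp hdz).symm

lemma s5_lostC (hxA : x ∉ A) (hdc : ∀ a ∈ A, d a = c a)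
    (hd1 : ∀ u, u ≠ x → d u ∈ L u)
    (hd2 : ∀ u w, u ≠ x → w ≠ x → G.Adj u w → d u ≠ d w)
    (u : V) (hu : u ≠ x) (h2 : d u ∈ (s5pk G L A c 2).1 u) (h3 : d u ∉ (s5pk G L A c 3).1 u) :
    ∃ z, G.Adj u z ∧ (s5pk G L A c 2).1 z = {d u} ∧
      (z = x ∨ (z ≠ x ∧ d z ∉ (s5pk G L A c 2).1 z)) := by
  rw [s5pk_succ] at h3
  obtain ⟨z, hz2, hadj, hcard, hmem⟩ := s5_lost_witness G _ u (d u) h2 h3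
  refine ⟨z, hadj, s5_eq_singleton hcard hmem, ?_⟩
  by_cases hzx : z = x
  · exact Or.inl hzx
  · refine Or.inr ⟨hzx, fun hIn => ?_⟩
    rw [s5_eq_singleton hcard hmem] at hIn
    exact hd2 u z hu hzx hadj (Finset.mem_singleton.mp hIn).symm

end Clean

theorem stmt_5 {V : Type*} [Fintype V] [DecidableEq V] (G : SimpleGraph V)
    [DecidableRel G.Adj] (L : V → Finset ℕ) (hsub : ∀ v, L v ⊆ ({1, 2, 3} : Finset ℕ))
    (hmin : MinimalListObstruction G L)
    (A : Finset V) (t m : ℕ) (hAt : A.card ≤ t)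
    (hsemi : ∀ c : V → ℕ, (∀ v ∈ A, c v ∈ L v) →
      (∀ u ∈ A, ∀ w ∈ A, G.Adj u w → c u ≠ c w) →
      ∀ v, ((((updateOnce G)^[3]) (fun w => if w ∈ A then {c w} else L w, A)).1 v).card ≤ 2)
    (hm : ∀ (L' : V → Finset ℕ) (S : Set V), (∀ v, L' v ⊆ L v) →
      (∀ v, (L' v).card ≤ 2) → MinimalListObstructionOn G L' S → S.ncard ≤ m) :
    Fintype.card V ≤ 36 * 3 ^ t * m + t := by
  classical
  -- choose, for each vertex outside A, a proper coloring of everything else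
  have hex : ∀ v : V, ∃ d : V → ℕ,
      v ∉ A → ((∀ u, u ≠ v → d u ∈ L u) ∧
        (∀ u w, u ≠ v → w ≠ v → G.Adj u w → d u ≠ d w)) := by
    intro v
    by_cases hv : v ∈ A
    · exact ⟨fun _ => 0, fun h => absurd hv h⟩
    · have hne : ({v}ᶜ : Set V) ≠ Set.univ := by
        intro h
        have h2 : v ∈ ({v}ᶜ : Set V) := by rw [h]; trivial
        simp at h2
      obtain ⟨d, hd1, hd2⟩ := hmin.2 _ hne
      refine ⟨d, fun _ => ⟨fun u hu => hd1 u (by simpa using hu), ?_⟩⟩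
      intro u w hu hw hadj
      exact hd2 u (by simpa using hu) w (by simpa using hw) hadj
  choose D hD using hex
  set rep : V → V → ℕ := fun v w => if w ∈ A then D v w else 0 with hrep
  set s : Finset V := Finset.univ.filter (fun v => v ∉ A) with hs
  set R : Finset (V → ℕ) := s.image rep with hR
  have fib : ∀ c ∈ R, (s.filter (fun v => rep v = c)).card ≤ 16 * m := by
    intro c hc
    obtain ⟨v₀, hv₀s, hv₀⟩ := Finset.mem_image.mp hc
    have hv₀A : v₀ ∉ A := by
      have := Finset.mem_filter.mp hv₀s
      exact this.2
    obtain ⟨hD10, hD20⟩ := hD v₀ hv₀A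
    have hcA : ∀ a ∈ A, c a ∈ L a := by
      intro a ha
      rw [← hv₀]
      simp only [hrep, if_pos ha]
      exact hD10 a (fun h => hv₀A (h ▸ ha))
    have hcProper : ∀ u ∈ A, ∀ w ∈ A, G.Adj u w → c u ≠ c w := by
      intro u hu w hw hadj
      rw [← hv₀]
      simp only [hrep, if_pos hu, if_pos hw]
      exact hD20 u w (fun h => hv₀A (h ▸ hu)) (fun h => hv₀A (h ▸ hw)) hadj
    have hcard2 : ∀ v, ((s5pk G L A c 3).1 v).card ≤ 2 := hsemi c hcA hcProper
    have hL3sub : ∀ v, (s5pk G L A c 3).1 v ⊆ L v := s5pk_subL G L A c hcA 3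
    have hnc : ¬ ListColorableOn G ((s5pk G L A c 3).1) Set.univ :=
      fun h => hmin.1 (s5_colorable_sub hL3sub h)
    -- minimal obstruction T
    set cand : Finset (Finset V) :=
      Finset.univ.filter (fun tt : Finset V => ¬ ListColorableOn G ((s5pk G L A c 3).1) ↑tt)
      with hcand
    have hcandne : cand.Nonempty := by
      refine ⟨Finset.univ, Finset.mem_filter.mpr ⟨Finset.mem_univ _, ?_⟩⟩
      rw [Finset.coe_univ]
      exact hnc
    obtain ⟨T, hTmem, hTmin⟩ := Finset.exists_min_image cand Finset.card hcandne
    have hTnc : ¬ ListColorableOn G ((s5pk G L A c 3).1) ↑T := (Finset.mem_filter.mp hTmem).2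
    have hTobs : MinimalListObstructionOn G ((s5pk G L A c 3).1) ↑T := by
      refine ⟨hTnc, ?_⟩
      intro T' hT'
      by_contra hT'nc
      have hfin : T'.Finite := Set.toFinite T'
      have ht'mem : hfin.toFinset ∈ cand := by
        refine Finset.mem_filter.mpr ⟨Finset.mem_univ _, ?_⟩
        rw [hfin.coe_toFinset]
        exact hT'nc
      have hss : hfin.toFinset ⊂ T := by
        rw [← Finset.coe_ssubset, hfin.coe_toFinset]
        exact hT'
      have := hTmin _ ht'mem
      have := Finset.card_lt_card hss
      omega
    have hTm : T.card ≤ m := by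
      have h := hm ((s5pk G L A c 3).1) ↑T hL3sub hcard2 hTobs
      rwa [Set.ncard_coe_finset] at h
    -- labels
    have hlab : ∀ v : V, ∃ (w : V) (a b : ℕ), v ∈ s.filter (fun v => rep v = c) →
        (w ∈ T ∧ a ≤ 3 ∧ b ≤ 3 ∧
          ((a = 0 ∧ b = 0 ∧ w = v)
          ∨ (a ≠ 0 ∧ b = 0 ∧ a = D v w ∧ w ≠ v ∧ G.Adj w v ∧ (s5pk G L A c 2).1 v = {a})
          ∨ (a ≠ 0 ∧ b ≠ 0 ∧ a ≠ b ∧ b = D v w ∧ w ≠ v ∧ (s5pk G L A c 1).1 v = {a} ∧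
              ∃ z, z ≠ v ∧ G.Adj w z ∧ G.Adj z v ∧ (s5pk G L A c 2).1 z = {b} ∧ D v z = a))) := by
      intro v
      by_cases hv : v ∈ s.filter (fun v => rep v = c)
      swap
      · exact ⟨v, 0, 0, fun h => absurd h hv⟩
      have hvA : v ∉ A := (Finset.mem_filter.mp (Finset.mem_filter.mp hv).1).2
      have hvrep : rep v = c := (Finset.mem_filter.mp hv).2
      obtain ⟨hd1, hd2⟩ := hD v hvA
      have hdc : ∀ a ∈ A, D v a = c a := by
        intro a ha; rw [← hvrep]; simp [hrep, if_pos ha]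
      have hwex : ∃ w ∈ T, w = v ∨ (w ≠ v ∧ D v w ∉ (s5pk G L A c 3).1 w) := by
        by_contra hcon
        push_neg at hcon
        apply hTnc
        refine ⟨D v, ?_, ?_⟩
        · intro u hu
          have h1 := hcon u (Finset.mem_coe.mp hu)
          exact h1.2 h1.1
        · intro u hu w hw hadj
          exact hd2 u w (hcon u (Finset.mem_coe.mp hu)).1 (hcon w (Finset.mem_coe.mp hw)).1 hadj
      obtain ⟨w, hwT, hwc⟩ := hwex
      rcases hwc with rfl | ⟨hwv, hw3⟩
      · exact ⟨w, 0, 0, fun _ => ⟨hwT, by norm_num, by norm_num, Or.inl ⟨rfl, rfl, rfl⟩⟩⟩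
      · have hdwL : D v w ∈ L w := hd1 w hwv
        have hdw123 : D v w = 1 ∨ D v w = 2 ∨ D v w = 3 := by
          have h2 := hsub w hdwL
          simp only [Finset.mem_insert, Finset.mem_singleton] at h2
          exact h2
        by_cases h2 : D v w ∈ (s5pk G L A c 2).1 w
        · obtain ⟨z, hadj, hsing, hzc⟩ := s5_lostC hvA hdc hd1 hd2 w hwv h2 hw3
          rcases hzc with hzeq | ⟨hzv, hz2⟩
          · rw [hzeq] at hadj hsing
            exact ⟨w, D v w, 0, fun _ => ⟨hwT, by omega, by norm_num, Or.inr (Or.inl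
              ⟨by omega, rfl, rfl, hwv, hadj, hsing⟩)⟩⟩
          · obtain ⟨hadjzv, hpk1v, hpk2v⟩ := s5_lostB hvA hdc hd1 hd2 z hzv hz2
            have hdzL : D v z ∈ L z := hd1 z hzv
            have hdz123 : D v z = 1 ∨ D v z = 2 ∨ D v z = 3 := by
              have h4 := hsub z hdzL
              simp only [Finset.mem_insert, Finset.mem_singleton] at h4
              exact h4
            have hab : D v z ≠ D v w := by
              intro h
              rw [h, hsing] at hz2
              simp at hz2
            exact ⟨w, D v z, D v w, fun _ => ⟨hwT, by omega, by omega, Or.inr (Or.inr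
              ⟨by omega, by omega, hab, rfl, hwv, hpk1v, z, hzv, hadj, hadjzv, hsing, rfl⟩)⟩⟩
        · obtain ⟨hadjwv, hpk1v, hpk2v⟩ := s5_lostB hvA hdc hd1 hd2 w hwv h2
          exact ⟨w, D v w, 0, fun _ => ⟨hwT, by omega, by norm_num, Or.inr (Or.inl
            ⟨by omega, rfl, rfl, hwv, hadjwv, hpk2v⟩)⟩⟩
    choose wf af bf hlab' using hlab
    have hinj : Set.InjOn (fun v => (wf v, af v, bf v))
        ↑(s.filter (fun v => rep v = c)) := by
      intro v hv v' hv' heq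
      by_contra hne
      have hvm := Finset.mem_coe.mp hv
      have hv'm := Finset.mem_coe.mp hv'
      obtain ⟨hwT, hle1, hle2, hPP⟩ := hlab' v hvm
      obtain ⟨hwT', hle1', hle2', hPP'⟩ := hlab' v' hv'm
      simp only [Prod.mk.injEq] at heq
      obtain ⟨hw, ha, hb⟩ := heq
      have hvA : v ∉ A := (Finset.mem_filter.mp (Finset.mem_filter.mp hvm).1).2
      have hvrep : rep v = c := (Finset.mem_filter.mp hvm).2
      obtain ⟨hd1, hd2⟩ := hD v hvA
      have hdc : ∀ a ∈ A, D v a = c a := by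
        intro a ha2; rw [← hvrep]; simp [hrep, if_pos ha2]
      have hne' : v' ≠ v := fun h => hne h.symm
      rw [← hw, ← ha, ← hb] at hPP'
      rcases hPP with ⟨ha0, hb0, hwv⟩ | ⟨ha0, hb0, haD, hwv, hadj, hpk2⟩ |
        ⟨ha0, hb0, hab, hbD, hwv, hpk1, z, hzv, hadjwz, hadjzv, hpkz, hzD⟩
      · rcases hPP' with ⟨ha0', hb0', hwv'⟩ | ⟨ha0', hb0', haD', hwv', hadj', hpk2'⟩ |
          ⟨ha0', hb0', hab', hbD', hwv', hpk1', z', hz'v', hadjwz', hadjz'v', hpkz', hz'D'⟩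
        · exact hne (hwv.symm.trans hwv')
        · exact ha0' ha0
        · exact ha0' ha0
      · rcases hPP' with ⟨ha0', hb0', hwv'⟩ | ⟨ha0', hb0', haD', hwv', hadj', hpk2'⟩ |
          ⟨ha0', hb0', hab', hbD', hwv', hpk1', z', hz'v', hadjwz', hadjz'v', hpkz', hz'D'⟩
        · exact ha0 ha0'
        · by_cases hcl : D v v' ∈ (s5pk G L A c 2).1 v'
          · rw [hpk2'] at hcl
            have h5 : D v v' = af v := Finset.mem_singleton.mp hcl
            exact hd2 (wf v) v' hwv hne' hadj' (by rw [← haD, h5])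
          · obtain ⟨_, hp1, _⟩ := s5_lostB hvA hdc hd1 hd2 v' hne' hcl
            have h6 : af v ∈ (s5pk G L A c 1).1 v :=
              s5pk_mono G L A c 1 v (hpk2 ▸ Finset.mem_singleton_self _)
            rw [hp1] at h6
            have h7 : af v = D v v' := Finset.mem_singleton.mp h6
            exact hd2 (wf v) v' hwv hne' hadj' (by rw [← haD, ← h7])
        · exact hb0' hb0
      · rcases hPP' with ⟨ha0', hb0', hwv'⟩ | ⟨ha0', hb0', haD', hwv', hadj', hpk2'⟩ |
          ⟨ha0', hb0', hab', hbD', hwv', hpk1', z', hz'v', hadjwz', hadjz'v', hpkz', hz'D'⟩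
        · exact ha0 ha0'
        · exact hb0 hb0'
        · have hv'1 : D v v' ∈ (s5pk G L A c 1).1 v' := s5_clean1 hvA hdc hd1 hd2 v' hne'
          rw [hpk1'] at hv'1
          have hdvv' : D v v' = af v := Finset.mem_singleton.mp hv'1
          have hz'v : z' ≠ v := by
            intro h
            have h8a : bf v ∈ (s5pk G L A c 2).1 z' := by
              rw [hpkz']; exact Finset.mem_singleton_self _
            rw [h] at h8a
            have h8 : bf v ∈ (s5pk G L A c 1).1 v := s5pk_mono G L A c 1 v h8a
            rw [hpk1] at h8
            exact hab (Finset.mem_singleton.mp h8).symm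
          by_cases hcl : D v z' ∈ (s5pk G L A c 2).1 z'
          · rw [hpkz'] at hcl
            have h9 : D v z' = bf v := Finset.mem_singleton.mp hcl
            exact hd2 (wf v) z' hwv hz'v hadjwz' (by rw [← hbD, h9])
          · obtain ⟨_, hp1, _⟩ := s5_lostB hvA hdc hd1 hd2 z' hz'v hcl
            have h10 : ({af v} : Finset ℕ) = {D v z'} := by rw [← hpk1, hp1]
            have h11 : af v = D v z' := Finset.singleton_injective h10
            exact hd2 z' v' hz'v hne' hadjz'v' (h11.symm.trans hdvv'.symm)
    have hmaps : ∀ v ∈ s.filter (fun v => rep v = c),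
        (wf v, af v, bf v) ∈ T ×ˢ (Finset.range 4 ×ˢ Finset.range 4) := by
      intro v hv
      obtain ⟨h1, h2, h3, _⟩ := hlab' v hv
      simp only [Finset.mem_product, Finset.mem_range]
      exact ⟨h1, by omega, by omega⟩
    have hcardle := Finset.card_le_card_of_injOn _ hmaps hinj
    have : (T ×ˢ (Finset.range 4 ×ˢ Finset.range 4)).card = T.card * 16 := by
      rw [Finset.card_product, Finset.card_product, Finset.card_range]
    omega
  -- assemble
  have hfibsum : s.card = ∑ c ∈ R, (s.filter (fun v => rep v = c)).card :=
    Finset.card_eq_sum_card_fiberwise (fun v hv => Finset.mem_image_of_mem rep hv)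
  have hscard : s.card ≤ R.card * (16 * m) := by
    rw [hfibsum]
    calc ∑ c ∈ R, (s.filter (fun v => rep v = c)).card ≤ R.card • (16 * m) :=
          Finset.sum_le_card_nsmul R _ (16 * m) fib
      _ = R.card * (16 * m) := by rw [smul_eq_mul]
  have hRcard : R.card ≤ 3 ^ t := by
    have hval : ∀ f ∈ R, ∀ w : V, (w ∈ A → 1 ≤ f w ∧ f w ≤ 3) ∧ (w ∉ A → f w = 0) := by
      intro f hf
      obtain ⟨v, hvs, rfl⟩ := Finset.mem_image.mp hf
      have hvA : v ∉ A := (Finset.mem_filter.mp hvs).2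
      intro w
      constructor
      · intro hw
        have he : rep v w = D v w := by simp [hrep, if_pos hw]
        rw [he]
        have h1 : D v w ∈ L w := (hD v hvA).1 w (fun h => hvA (h ▸ hw))
        have h2 := hsub w h1
        simp only [Finset.mem_insert, Finset.mem_singleton] at h2
        omega
      · intro hw; simp [hrep, if_neg hw]
    have hginj : Set.InjOn (fun f : V → ℕ => fun a : ↥A =>
        (⟨(f ↑a - 1) % 3, Nat.mod_lt _ (by norm_num)⟩ : Fin 3)) ↑R := by
      intro f hf f' hf' heq
      funext w
      by_cases hw : w ∈ A
      · have h1 := ((hval f (Finset.mem_coe.mp hf)) w).1 hw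
        have h2 := ((hval f' (Finset.mem_coe.mp hf')) w).1 hw
        have h3 := congrFun heq ⟨w, hw⟩
        simp only [Fin.mk.injEq] at h3
        rw [Nat.mod_eq_of_lt (by omega), Nat.mod_eq_of_lt (by omega)] at h3
        omega
      · rw [((hval f (Finset.mem_coe.mp hf)) w).2 hw, ((hval f' (Finset.mem_coe.mp hf')) w).2 hw]
    have h3 := Finset.card_le_card_of_injOn _ (fun f _ => Finset.mem_univ _) hginj
    rw [Finset.card_univ, Fintype.card_fun, Fintype.card_coe, Fintype.card_fin] at h3
    exact h3.trans (Nat.pow_le_pow_right (by norm_num) hAt)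
  have hpart : s.card + A.card = Fintype.card V := by
    have h1 : Finset.univ.filter (fun v => ¬ v ∉ A) = A := by
      ext v; simp
    have h2 := Finset.card_filter_add_card_filter_not (s := Finset.univ)
      (p := fun v : V => v ∉ A)
    rw [h1] at h2
    rw [← Finset.card_univ]
    exact h2
  have hfinal : s.card ≤ 36 * 3 ^ t * m := by
    calc s.card ≤ R.card * (16 * m) := hscard
      _ ≤ 3 ^ t * (16 * m) := Nat.mul_le_mul_right _ hRcard
      _ = 16 * (3 ^ t * m) := by ring
      _ ≤ 36 * (3 ^ t * m) := Nat.mul_le_mul_right _ (by norm_num)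
      _ = 36 * 3 ^ t * m := by ring
  omega
end

section
/- Let G be a P6-free graph (no induced path on 6 vertices) and v ∈ V(G) such that the subgraph induced by N(v) is connected and bipartite with bipartition (A,B). Let G' be the graph obtained from G \ (A ∪ B) by adding two new adjacent vertices a, b where the neighborhood of a in G' is {b} together with all vertices of V(G') having a G-neighbor in A, and the neighborhood of b in G' is {a} together with all vertices of V(G') having a G-neighbor in B. Then G' is P6-free. -/
/-!
An induced `P₆` of `G'` is pulled back to `G`. Real vertices stay; `a` is replaced by a vertex of
`A` adjacent to every real path-neighbour of `a`, `b` likewise by a vertex of `B`, and when both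
occur the two replacements must be adjacent. When no such replacement exists, the path-neighbours
`p, q` of `a` (or of the segment `a b`) have neighbours `s, t ∈ N(v)` with `s ≁ t`, and the detour
`p - s - v - t - q` is used instead: it lengthens the path, so together with one more path vertex
it is an induced `P₆` of `G`. A path starting with `a b` becomes `v - t - …`. Reversing the path
and exchanging `A` and `B` put `a` into the first half of the path.
-/

open SimpleGraph Function

/-- The contracted graph `G'`: delete `A ∪ B` and add two new adjacent vertices `a`
(= `Sum.inr 0`) and `b` (= `Sum.inr 1`), where `a` is adjacent to the vertices that had a
neighbor in `A` and `b` to those that had a neighbor in `B`. -/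
def contractBip {V : Type*} (G : SimpleGraph V) (A B : Set V) :
    SimpleGraph ({w : V // w ∉ A ∪ B} ⊕ Fin 2) :=
  SimpleGraph.fromRel (fun x y =>
    match x, y with
    | Sum.inl u, Sum.inl w => G.Adj u.1 w.1
    | Sum.inl u, Sum.inr i =>
        (i = 0 ∧ ∃ a ∈ A, G.Adj u.1 a) ∨ (i = 1 ∧ ∃ b ∈ B, G.Adj u.1 b)
    | Sum.inr i, Sum.inr j => i = 0 ∧ j = 1
    | Sum.inr _, Sum.inl _ => False)

namespace SimpleGraph

instance (n : ℕ) : DecidableRel (pathGraph n).Adj := fun _ _ => decidable_of_iff' _ pathGraph_adj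

def pathGraph.revIso (n : ℕ) : pathGraph n ≃g pathGraph n where
  toEquiv := Fin.revPerm
  map_rel_iff' {i j} := by
    simp only [Fin.revPerm_apply, pathGraph_adj, Fin.val_rev]
    omega

@[simp] theorem pathGraph.revIso_apply {n : ℕ} (i : Fin n) : pathGraph.revIso n i = i.rev := rfl

variable {V : Type*} {G : SimpleGraph V}

theorem injective_of_adj_iff_pathGraph {n : ℕ} (hn : 4 ≤ n) {p : Fin n → V}
    (hadj : ∀ i j, G.Adj (p i) (p j) ↔ (pathGraph n).Adj i j) : Injective p := by
  have separated : ∀ i j : Fin n, i < j →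
      ∃ k, (pathGraph n).Adj k i ∧ ¬ (pathGraph n).Adj k j ∨
        (pathGraph n).Adj k j ∧ ¬ (pathGraph n).Adj k i := by
    intro i j hij
    simp only [pathGraph_adj, Fin.lt_def] at hij ⊢
    by_cases hj : j.val + 1 < n
    · exact ⟨⟨j.val + 1, hj⟩, by dsimp only; omega⟩
    by_cases hi : 1 ≤ i.val
    · exact ⟨⟨i.val - 1, by omega⟩, by dsimp only; omega⟩
    · exact ⟨⟨1, by omega⟩, by dsimp only; omega⟩
  have hne : ∀ i j : Fin n, i < j → p i ≠ p j := by
    intro i j hij heq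
    obtain ⟨k, hk⟩ := separated i j hij
    rw [← hadj, ← hadj, heq] at hk
    tauto
  intro i j h
  rcases lt_trichotomy i j with hij | rfl | hij
  · exact absurd h (hne i j hij)
  · rfl
  · exact absurd h.symm (hne j i hij)

theorem nonempty_embedding_pathGraph_six {x₀ x₁ x₂ x₃ x₄ x₅ : V}
    (h₀₁ : G.Adj x₀ x₁) (h₁₂ : G.Adj x₁ x₂) (h₂₃ : G.Adj x₂ x₃) (h₃₄ : G.Adj x₃ x₄)
    (h₄₅ : G.Adj x₄ x₅)
    (h₀₂ : ¬ G.Adj x₀ x₂) (h₀₃ : ¬ G.Adj x₀ x₃) (h₀₄ : ¬ G.Adj x₀ x₄) (h₀₅ : ¬ G.Adj x₀ x₅)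
    (h₁₃ : ¬ G.Adj x₁ x₃) (h₁₄ : ¬ G.Adj x₁ x₄) (h₁₅ : ¬ G.Adj x₁ x₅)
    (h₂₄ : ¬ G.Adj x₂ x₄) (h₂₅ : ¬ G.Adj x₂ x₅) (h₃₅ : ¬ G.Adj x₃ x₅) :
    Nonempty (pathGraph 6 ↪g G) := by
  have hadj : ∀ i j, G.Adj (![x₀, x₁, x₂, x₃, x₄, x₅] i) (![x₀, x₁, x₂, x₃, x₄, x₅] j) ↔
      (pathGraph 6).Adj i j := by
    intro i j
    fin_cases i <;> fin_cases j <;>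
      simp [pathGraph_adj, G.adj_comm x₁ x₀, G.adj_comm x₂ x₁, G.adj_comm x₃ x₂, G.adj_comm x₄ x₃,
        G.adj_comm x₅ x₄, G.adj_comm x₂ x₀, G.adj_comm x₃ x₀, G.adj_comm x₄ x₀, G.adj_comm x₅ x₀,
        G.adj_comm x₃ x₁, G.adj_comm x₄ x₁, G.adj_comm x₅ x₁, G.adj_comm x₄ x₂, G.adj_comm x₅ x₂,
        G.adj_comm x₅ x₃, *]
  exact ⟨⟨⟨_, injective_of_adj_iff_pathGraph (by norm_num) hadj⟩, hadj _ _⟩⟩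

/-- `p - s - v - t - q - r` is an induced path. -/
theorem nonempty_embedding_pathGraph_six_of_detour {v p s t q r : V}
    (hvs : G.Adj v s) (hvt : G.Adj v t) (hvp : ¬ G.Adj v p) (hvq : ¬ G.Adj v q)
    (hvr : ¬ G.Adj v r) (hps : G.Adj p s) (hqt : G.Adj q t) (hqr : G.Adj q r)
    (hst : ¬ G.Adj s t) (hpt : ¬ G.Adj p t) (hqs : ¬ G.Adj q s) (hrs : ¬ G.Adj r s)
    (hrt : ¬ G.Adj r t) (hpq : ¬ G.Adj p q) (hpr : ¬ G.Adj p r) :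
    Nonempty (pathGraph 6 ↪g G) :=
  nonempty_embedding_pathGraph_six hps hvs.symm hvt hqt.symm hqr
    (fun h => hvp h.symm) hpt hpq hpr hst (fun h => hqs h.symm) (fun h => hrs h.symm) hvq hvr
    (fun h => hrt h.symm)

end SimpleGraph

namespace contractBip

variable {V W : Type*} {G : SimpleGraph V} {A B : Set V} {H : SimpleGraph W}

@[simp] theorem adj_inl_inl {u w : {w : V // w ∉ A ∪ B}} :
    (contractBip G A B).Adj (.inl u) (.inl w) ↔ G.Adj u w := by
  simp only [contractBip, fromRel_adj, ne_eq, Sum.inl.injEq]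
  exact ⟨fun ⟨_, h⟩ => h.elim id G.adj_symm, fun h => ⟨fun e => h.ne (congrArg _ e), .inl h⟩⟩

@[simp] theorem adj_inl_zero {u : {w : V // w ∉ A ∪ B}} :
    (contractBip G A B).Adj (.inl u) (.inr 0) ↔ ∃ x ∈ A, G.Adj u x := by
  simp [contractBip]

@[simp] theorem adj_inl_one {u : {w : V // w ∉ A ∪ B}} :
    (contractBip G A B).Adj (.inl u) (.inr 1) ↔ ∃ y ∈ B, G.Adj u y := by
  simp [contractBip]

@[simp] theorem adj_inr_inr {i j : Fin 2} :
    (contractBip G A B).Adj (.inr i) (.inr j) ↔ i ≠ j := by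
  fin_cases i <;> fin_cases j <;> simp [contractBip]

def swapIso (G : SimpleGraph V) (A B : Set V) : contractBip G A B ≃g contractBip G B A where
  toEquiv := .sumCongr (.subtypeEquivRight fun _ => by rw [Set.union_comm]) Fin.revPerm
  map_rel_iff' {p q} := by
    rcases p with u | i <;> rcases q with w | j
    · simp
    · fin_cases j <;> simp
    · rw [adj_comm, (contractBip G A B).adj_comm]; fin_cases i <;> simp
    · fin_cases i <;> fin_cases j <;> simp

@[simp] theorem swapIso_inr (i : Fin 2) : swapIso G A B (.inr i) = .inr i.rev := rfl

theorem exists_eq_inl_of_ne_inr {p : {w : V // w ∉ A ∪ B} ⊕ Fin 2} (h₀ : p ≠ .inr 0)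
    (h₁ : p ≠ .inr 1) : ∃ u, p = .inl u := by
  rcases p with u | m
  · exact ⟨u, rfl⟩
  · fin_cases m <;> simp_all

section Embedding

variable (f : H ↪g contractBip G A B) {i j : W} {u w : {w : V // w ∉ A ∪ B}}

theorem adj_iff_of_eq_inl (hi : f i = .inl u) (hj : f j = .inl w) : G.Adj u w ↔ H.Adj i j := by
  rw [← f.map_adj_iff, hi, hj, adj_inl_inl]

theorem exists_adj_zero_iff (hi : f i = .inl u) (hj : f j = .inr 0) :
    (∃ x ∈ A, G.Adj u x) ↔ H.Adj i j := by
  rw [← f.map_adj_iff, hi, hj, adj_inl_zero]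

theorem exists_adj_one_iff (hi : f i = .inl u) (hj : f j = .inr 1) :
    (∃ y ∈ B, G.Adj u y) ↔ H.Adj i j := by
  rw [← f.map_adj_iff, hi, hj, adj_inl_one]

theorem not_adj_of_eq_inr_zero (hi : f i = .inl u) (hj : f j = .inr 0) (hij : ¬ H.Adj i j)
    {x : V} (hx : x ∈ A) : ¬ G.Adj u x :=
  fun h => hij ((exists_adj_zero_iff f hi hj).1 ⟨x, hx, h⟩)

theorem not_adj_of_eq_inr_one (hi : f i = .inl u) (hj : f j = .inr 1) (hij : ¬ H.Adj i j)
    {y : V} (hy : y ∈ B) : ¬ G.Adj u y :=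
  fun h => hij ((exists_adj_one_iff f hi hj).1 ⟨y, hy, h⟩)

end Embedding

theorem nonempty_embedding_of_lift (f : H ↪g contractBip G A B) (x y : V)
    (hx : ∀ i, f i = .inr 0 → x ∈ A ∧ ∀ j u, f j = .inl u → H.Adj j i → G.Adj u x)
    (hy : ∀ i, f i = .inr 1 → y ∈ B ∧ ∀ j u, f j = .inl u → H.Adj j i → G.Adj u y)
    (hxy : ∀ i j, f i = .inr 0 → f j = .inr 1 → G.Adj x y) :
    Nonempty (H ↪g G) := by
  let σ : {w : V // w ∉ A ∪ B} ⊕ Fin 2 → V := Sum.elim Subtype.val ![x, y]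
  have hreal : ∀ i j u m, f i = .inl u → f j = .inr m →
      (G.Adj u (σ (.inr m)) ↔ H.Adj i j) ∧ u.1 ≠ σ (.inr m) := by
    intro i j u m hi hj
    fin_cases m
    · obtain ⟨hxA, hxN⟩ := hx j hj
      exact ⟨⟨fun h => (exists_adj_zero_iff f hi hj).1 ⟨x, hxA, h⟩, hxN i u hi⟩,
        fun e => u.2 (.inl (e ▸ hxA))⟩
    · obtain ⟨hyB, hyN⟩ := hy j hj
      exact ⟨⟨fun h => (exists_adj_one_iff f hi hj).1 ⟨y, hyB, h⟩, hyN i u hi⟩,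
        fun e => u.2 (.inr (e ▸ hyB))⟩
  have hfake : ∀ i j m n, f i = .inr m → f j = .inr n →
      (G.Adj (σ (.inr m)) (σ (.inr n)) ↔ H.Adj i j) ∧ (σ (.inr m) = σ (.inr n) → i = j) := by
    intro i j m n hi hj
    rw [← f.map_adj_iff, hi, hj, adj_inr_inr]
    fin_cases m <;> fin_cases n
    · simp [σ, f.injective (hi.trans hj.symm)]
    · have := hxy i j hi hj
      simp [σ, this, this.ne]
    · have := hxy j i hj hi
      simp [σ, this.symm, this.ne']
    · simp [σ, f.injective (hi.trans hj.symm)]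
  have hadj : ∀ i j, G.Adj (σ (f i)) (σ (f j)) ↔ H.Adj i j := by
    intro i j
    rcases hi : f i with u | m <;> rcases hj : f j with w | n
    · exact adj_iff_of_eq_inl f hi hj
    · exact (hreal i j u n hi hj).1
    · rw [G.adj_comm, H.adj_comm]; exact (hreal j i w m hj hi).1
    · exact (hfake i j m n hi hj).1
  have hinj : Injective (σ ∘ f) := by
    intro i j h
    simp only [comp_apply] at h
    rcases hi : f i with u | m <;> rcases hj : f j with w | n <;> rw [hi, hj] at h
    · exact f.injective (by rw [hi, hj]; exact congrArg _ (Subtype.ext h))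
    · exact absurd h (hreal i j u n hi hj).2
    · exact absurd h.symm (hreal j i w m hj hi).2
    · exact (hfake i j m n hi hj).2 h
  exact ⟨⟨⟨_, hinj⟩, hadj _ _⟩⟩

theorem nonempty_embedding_of_lift_single (f : H ↪g contractBip G A B) {i : W}
    (hi : f i = .inr 0) (hb : ∀ j, f j ≠ .inr 1) {x : V} (hx : x ∈ A)
    (hxN : ∀ j u, f j = .inl u → H.Adj j i → G.Adj u x) : Nonempty (H ↪g G) :=
  nonempty_embedding_of_lift f x x (fun _ hi' => f.injective (hi'.trans hi.symm) ▸ ⟨hx, hxN⟩)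
    (fun j h => absurd h (hb j)) (fun _ j _ h => absurd h (hb j))

section Contraction

variable {V : Type*} {G : SimpleGraph V} {v : V} {A B : Set V}

theorem adj_of_mem_union (hN : A ∪ B = G.neighborSet v) {x : V} (hx : x ∈ A ∪ B) :
    G.Adj v x := by
  rwa [hN] at hx

theorem not_adj_of_not_mem_union (hN : A ∪ B = G.neighborSet v) {u : V} (hu : u ∉ A ∪ B) :
    ¬ G.Adj v u := by
  rwa [hN] at hu

variable (f : pathGraph 6 ↪g contractBip G A B)

theorem nonempty_embedding_of_single_interior (hN : A ∪ B = G.neighborSet v)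
    (hA : ∀ x ∈ A, ∀ y ∈ A, ¬ G.Adj x y)
    {jp ja jq jr : Fin 6} {p q r : {w : V // w ∉ A ∪ B}} (ha : f ja = .inr 0)
    (hb : ∀ j, f j ≠ .inr 1) (hp : f jp = .inl p) (hq : f jq = .inl q) (hr : f jr = .inl r)
    (hnbr : ∀ j, (pathGraph 6).Adj j ja ↔ j = jp ∨ j = jq) (hqr : (pathGraph 6).Adj jq jr)
    (hpq : ¬ (pathGraph 6).Adj jp jq) (hpr : ¬ (pathGraph 6).Adj jp jr)
    (har : ¬ (pathGraph 6).Adj jr ja) :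
    Nonempty (pathGraph 6 ↪g G) := by
  by_cases hc : ∃ x ∈ A, G.Adj p x ∧ G.Adj q x
  · obtain ⟨x, hx, hpx, hqx⟩ := hc
    refine nonempty_embedding_of_lift_single f ha hb hx fun j u hj hadj => ?_
    obtain rfl | rfl := (hnbr j).1 hadj
    · rwa [Sum.inl_injective (hj.symm.trans hp)]
    · rwa [Sum.inl_injective (hj.symm.trans hq)]
  push Not at hc
  obtain ⟨s, hs, hps⟩ := (exists_adj_zero_iff f hp ha).2 ((hnbr jp).2 (.inl rfl))
  obtain ⟨t, ht, hqt⟩ := (exists_adj_zero_iff f hq ha).2 ((hnbr jq).2 (.inr rfl))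
  exact nonempty_embedding_pathGraph_six_of_detour (adj_of_mem_union hN (.inl hs))
    (adj_of_mem_union hN (.inl ht)) (not_adj_of_not_mem_union hN p.2)
    (not_adj_of_not_mem_union hN q.2) (not_adj_of_not_mem_union hN r.2) hps hqt
    ((adj_iff_of_eq_inl f hq hr).2 hqr) (hA s hs t ht) (fun h => hc t ht h hqt) (hc s hs hps)
    (not_adj_of_eq_inr_zero f hr ha har hs) (not_adj_of_eq_inr_zero f hr ha har ht)
    (mt (adj_iff_of_eq_inl f hp hq).1 hpq) (mt (adj_iff_of_eq_inl f hp hr).1 hpr)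

theorem nonempty_embedding_of_single_le_two (hN : A ∪ B = G.neighborSet v)
    (hA : ∀ x ∈ A, ∀ y ∈ A, ¬ G.Adj x y) {i : Fin 6} (hi : f i = .inr 0)
    (hb : ∀ j, f j ≠ .inr 1) (hi₂ : i.val ≤ 2) :
    Nonempty (pathGraph 6 ↪g G) := by
  have real : ∀ k, k ≠ i → ∃ u, f k = .inl u := fun k hk =>
    exists_eq_inl_of_ne_inr (hi ▸ f.injective.ne hk) (hb k)
  obtain rfl | rfl | rfl : i = 0 ∨ i = 1 ∨ i = 2 := by omega
  · obtain ⟨u₁, h₁⟩ := real 1 (by decide)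
    obtain ⟨x, hx, hux⟩ := (exists_adj_zero_iff f h₁ hi).2 (by decide)
    refine nonempty_embedding_of_lift_single f hi hb hx fun j u hj hadj => ?_
    obtain rfl : j = 1 := by rw [pathGraph_adj] at hadj; omega
    rwa [Sum.inl_injective (hj.symm.trans h₁)]
  · obtain ⟨u₀, h₀⟩ := real 0 (by decide)
    obtain ⟨u₂, h₂⟩ := real 2 (by decide)
    obtain ⟨u₃, h₃⟩ := real 3 (by decide)
    exact nonempty_embedding_of_single_interior f hN hA hi hb h₀ h₂ h₃ (by decide) (by decide)
      (by decide) (by decide) (by decide)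
  · obtain ⟨u₁, h₁⟩ := real 1 (by decide)
    obtain ⟨u₃, h₃⟩ := real 3 (by decide)
    obtain ⟨u₄, h₄⟩ := real 4 (by decide)
    exact nonempty_embedding_of_single_interior f hN hA hi hb h₁ h₃ h₄ (by decide) (by decide)
      (by decide) (by decide) (by decide)

theorem nonempty_embedding_of_pair_interior (hN : A ∪ B = G.neighborSet v)
    {jp ja jb jq jr : Fin 6} {p q r : {w : V // w ∉ A ∪ B}} (ha : f ja = .inr 0)
    (hb : f jb = .inr 1) (hp : f jp = .inl p) (hq : f jq = .inl q) (hr : f jr = .inl r)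
    (hnbra : ∀ j, (pathGraph 6).Adj j ja ↔ j = jp ∨ j = jb)
    (hnbrb : ∀ j, (pathGraph 6).Adj j jb ↔ j = ja ∨ j = jq) (hqr : (pathGraph 6).Adj jq jr)
    (hpb : ¬ (pathGraph 6).Adj jp jb) (hqa : ¬ (pathGraph 6).Adj jq ja)
    (hpq : ¬ (pathGraph 6).Adj jp jq) (hpr : ¬ (pathGraph 6).Adj jp jr)
    (har : ¬ (pathGraph 6).Adj jr ja) (hbr : ¬ (pathGraph 6).Adj jr jb) :
    Nonempty (pathGraph 6 ↪g G) := by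
  by_cases hc : ∃ x ∈ A, ∃ y ∈ B, G.Adj p x ∧ G.Adj x y ∧ G.Adj q y
  · obtain ⟨x, hx, y, hy, hpx, hxy, hqy⟩ := hc
    refine nonempty_embedding_of_lift f x y (fun i hi => ?_) (fun i hi => ?_) fun _ _ _ _ => hxy
    · obtain rfl := f.injective (hi.trans ha.symm)
      refine ⟨hx, fun j u hj hadj => ?_⟩
      obtain rfl | rfl := (hnbra j).1 hadj
      · rwa [Sum.inl_injective (hj.symm.trans hp)]
      · exact (Sum.inl_ne_inr (hj.symm.trans hb)).elim
    · obtain rfl := f.injective (hi.trans hb.symm)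
      refine ⟨hy, fun j u hj hadj => ?_⟩
      obtain rfl | rfl := (hnbrb j).1 hadj
      · exact (Sum.inl_ne_inr (hj.symm.trans ha)).elim
      · rwa [Sum.inl_injective (hj.symm.trans hq)]
  push Not at hc
  obtain ⟨s, hs, hps⟩ := (exists_adj_zero_iff f hp ha).2 ((hnbra jp).2 (.inl rfl))
  obtain ⟨t, ht, hqt⟩ := (exists_adj_one_iff f hq hb).2 ((hnbrb jq).2 (.inr rfl))
  exact nonempty_embedding_pathGraph_six_of_detour (adj_of_mem_union hN (.inl hs))
    (adj_of_mem_union hN (.inr ht)) (not_adj_of_not_mem_union hN p.2)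
    (not_adj_of_not_mem_union hN q.2) (not_adj_of_not_mem_union hN r.2) hps hqt
    ((adj_iff_of_eq_inl f hq hr).2 hqr) (fun h => hc s hs t ht hps h hqt)
    (not_adj_of_eq_inr_one f hp hb hpb ht) (not_adj_of_eq_inr_zero f hq ha hqa hs)
    (not_adj_of_eq_inr_zero f hr ha har hs) (not_adj_of_eq_inr_one f hr hb hbr ht)
    (mt (adj_iff_of_eq_inl f hp hq).1 hpq) (mt (adj_iff_of_eq_inl f hp hr).1 hpr)

theorem nonempty_embedding_of_pair_le_two (hN : A ∪ B = G.neighborSet v) {i j : Fin 6}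
    (hi : f i = .inr 0) (hj : f j = .inr 1) (hij : i.val + 1 = j.val) (hi₂ : i.val ≤ 2) :
    Nonempty (pathGraph 6 ↪g G) := by
  have real : ∀ k, k ≠ i → k ≠ j → ∃ u, f k = .inl u := fun k hki hkj =>
    exists_eq_inl_of_ne_inr (hi ▸ f.injective.ne hki) (hj ▸ f.injective.ne hkj)
  obtain ⟨rfl, rfl⟩ | ⟨rfl, rfl⟩ | ⟨rfl, rfl⟩ :
      i = 0 ∧ j = 1 ∨ i = 1 ∧ j = 2 ∨ i = 2 ∧ j = 3 := by omega
  · obtain ⟨u₂, h₂⟩ := real 2 (by decide) (by decide)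
    obtain ⟨u₃, h₃⟩ := real 3 (by decide) (by decide)
    obtain ⟨u₄, h₄⟩ := real 4 (by decide) (by decide)
    obtain ⟨u₅, h₅⟩ := real 5 (by decide) (by decide)
    obtain ⟨t, ht, h₂t⟩ := (exists_adj_one_iff f h₂ hj).2 (by decide)
    exact nonempty_embedding_pathGraph_six (adj_of_mem_union hN (.inr ht)) h₂t.symm
      ((adj_iff_of_eq_inl f h₂ h₃).2 (by decide)) ((adj_iff_of_eq_inl f h₃ h₄).2 (by decide))
      ((adj_iff_of_eq_inl f h₄ h₅).2 (by decide))
      (not_adj_of_not_mem_union hN u₂.2) (not_adj_of_not_mem_union hN u₃.2)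
      (not_adj_of_not_mem_union hN u₄.2) (not_adj_of_not_mem_union hN u₅.2)
      (fun h => not_adj_of_eq_inr_one f h₃ hj (by decide) ht h.symm)
      (fun h => not_adj_of_eq_inr_one f h₄ hj (by decide) ht h.symm)
      (fun h => not_adj_of_eq_inr_one f h₅ hj (by decide) ht h.symm)
      (mt (adj_iff_of_eq_inl f h₂ h₄).1 (by decide)) (mt (adj_iff_of_eq_inl f h₂ h₅).1 (by decide))
      (mt (adj_iff_of_eq_inl f h₃ h₅).1 (by decide))
  · obtain ⟨u₀, h₀⟩ := real 0 (by decide) (by decide)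
    obtain ⟨u₃, h₃⟩ := real 3 (by decide) (by decide)
    obtain ⟨u₄, h₄⟩ := real 4 (by decide) (by decide)
    exact nonempty_embedding_of_pair_interior f hN hi hj h₀ h₃ h₄ (by decide) (by decide)
      (by decide) (by decide) (by decide) (by decide) (by decide) (by decide) (by decide)
  · obtain ⟨u₁, h₁⟩ := real 1 (by decide) (by decide)
    obtain ⟨u₄, h₄⟩ := real 4 (by decide) (by decide)
    obtain ⟨u₅, h₅⟩ := real 5 (by decide) (by decide)
    exact nonempty_embedding_of_pair_interior f hN hi hj h₁ h₄ h₅ (by decide) (by decide)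
      (by decide) (by decide) (by decide) (by decide) (by decide) (by decide) (by decide)

theorem nonempty_embedding_of_single (hN : A ∪ B = G.neighborSet v)
    (hA : ∀ x ∈ A, ∀ y ∈ A, ¬ G.Adj x y) {i : Fin 6} (hi : f i = .inr 0)
    (hb : ∀ j, f j ≠ .inr 1) : Nonempty (pathGraph 6 ↪g G) := by
  by_cases hi₂ : i.val ≤ 2
  · exact nonempty_embedding_of_single_le_two f hN hA hi hb hi₂
  · refine nonempty_embedding_of_single_le_two (f.comp (pathGraph.revIso 6).toEmbedding) hN hA
      (i := i.rev) (by simpa using hi) (fun j => hb _) ?_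
    rw [Fin.val_rev]; omega

theorem nonempty_embedding_of_pair (hN : A ∪ B = G.neighborSet v) {i j : Fin 6}
    (hi : f i = .inr 0) (hj : f j = .inr 1) (hij : i.val + 1 = j.val) :
    Nonempty (pathGraph 6 ↪g G) := by
  by_cases hi₂ : i.val ≤ 2
  · exact nonempty_embedding_of_pair_le_two f hN hi hj hij hi₂
  · refine nonempty_embedding_of_pair_le_two
      ((swapIso G A B).toEmbedding.comp (f.comp (pathGraph.revIso 6).toEmbedding))
      ((Set.union_comm B A).trans hN) (i := j.rev) (j := i.rev) ?_ ?_ ?_ ?_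
    · simp [hj]
    · simp [hi]
    all_goals simp only [Fin.val_rev]; omega

end Contraction

end contractBip

theorem stmt_6_general {V : Type*} (G : SimpleGraph V) (v : V) (A B : Set V)
    (hN : A ∪ B = G.neighborSet v)
    (hAstable : ∀ x ∈ A, ∀ y ∈ A, ¬ G.Adj x y)
    (hBstable : ∀ x ∈ B, ∀ y ∈ B, ¬ G.Adj x y)
    (hfree : ¬ Nonempty (pathGraph 6 ↪g G)) :
    ¬ Nonempty (pathGraph 6 ↪g contractBip G A B) := by
  rintro ⟨f⟩
  apply hfree
  let f' := (contractBip.swapIso G A B).toEmbedding.comp f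
  have hN' : B ∪ A = G.neighborSet v := (Set.union_comm B A).trans hN
  by_cases ha : ∃ i, f i = .inr 0 <;> by_cases hb : ∃ j, f j = .inr 1
  · obtain ⟨i, hi⟩ := ha
    obtain ⟨j, hj⟩ := hb
    have hij : (pathGraph 6).Adj i j := f.map_adj_iff.1 (by simp [hi, hj])
    rcases pathGraph_adj.1 hij with h | h
    · exact contractBip.nonempty_embedding_of_pair f hN hi hj h
    · exact contractBip.nonempty_embedding_of_pair f' hN' (by simp [f', hj]) (by simp [f', hi]) h
  · obtain ⟨i, hi⟩ := ha
    exact contractBip.nonempty_embedding_of_single f hN hAstable hi (not_exists.1 hb)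
  · obtain ⟨j, hj⟩ := hb
    exact contractBip.nonempty_embedding_of_single f' hN' hBstable (i := j) (by simp [f', hj])
      fun k hk => ha ⟨k, (contractBip.swapIso G A B).injective (hk.trans rfl)⟩
  · exact contractBip.nonempty_embedding_of_lift f v v (fun i h => (ha ⟨i, h⟩).elim)
      (fun i h => (hb ⟨i, h⟩).elim) fun i _ h _ => (ha ⟨i, h⟩).elim

theorem stmt_6 {V : Type*} (G : SimpleGraph V) (v : V) (A B : Set V)
    (hdisj : Disjoint A B) (hN : A ∪ B = G.neighborSet v)
    (hAstable : ∀ x ∈ A, ∀ y ∈ A, ¬ G.Adj x y)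
    (hBstable : ∀ x ∈ B, ∀ y ∈ B, ¬ G.Adj x y)
    (hconn : (G.induce (A ∪ B)).Connected)
    (hfree : ¬ Nonempty (pathGraph 6 ↪g G)) :
    ¬ Nonempty (pathGraph 6 ↪g contractBip G A B) :=
  stmt_6_general G v A B hN hAstable hBstable hfree
end

section
/- For every r ≥ 1, let G_r be the graph on vertices v_0, v_1, …, v_{3r} (indices modulo 3r+1) where v_i is adjacent to v_{i-1}, v_{i+1}, and to v_{i+3j+2} for every j ∈ {0,…,r-1}. Then G_r is not 3-colorable. -/
/-- Pokrovskiy's graph `G_r` on vertex set `ZMod (3r+1)`: `v` is adjacent to `v ± 1`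
and to `v + (3j+2)` (and symmetrically `v - (3j+2)`) for every `0 ≤ j ≤ r-1`. -/
def pokGraph (r : ℕ) : SimpleGraph (ZMod (3 * r + 1)) :=
  SimpleGraph.fromRel (fun x y => y = x + 1 ∨ ∃ j : ℕ, j < r ∧ y = x + (3 * j + 2))

lemma fin3_aux : ∀ a b c d : Fin 3, a ≠ b → a ≠ c → b ≠ c → d ≠ b → d ≠ c → d = a := by
  intro a b c d
  fin_cases a <;> fin_cases b <;> fin_cases c <;> fin_cases d <;> decide

theorem stmt_8 (r : ℕ) (hr : 1 ≤ r) :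
    ¬ ∃ c : ZMod (3 * r + 1) → Fin 3, ∀ u w, (pokGraph r).Adj u w → c u ≠ c w := by
  rintro ⟨c, hc⟩
  haveI : NeZero (3 * r + 1) := ⟨by omega⟩
  have hne : ∀ k : ℕ, 0 < k → k < 3 * r + 1 → (k : ZMod (3 * r + 1)) ≠ 0 := by
    intro k hk1 hk2 h
    rw [ZMod.natCast_eq_zero_iff] at h
    have := Nat.le_of_dvd hk1 h
    omega
  have h1 : (1 : ZMod (3 * r + 1)) ≠ 0 := by
    have := hne 1 (by omega) (by omega); simpa using this
  have h2 : (2 : ZMod (3 * r + 1)) ≠ 0 := by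
    have := hne 2 (by omega) (by omega); simpa using this
  have adj1 : ∀ v : ZMod (3 * r + 1), (pokGraph r).Adj v (v + 1) := by
    intro v
    refine ⟨fun h => h1 ?_, Or.inl (Or.inl rfl)⟩
    have := congrArg (· - v) h
    simpa using this.symm
  have adj2 : ∀ v : ZMod (3 * r + 1), (pokGraph r).Adj v (v + 2) := by
    intro v
    refine ⟨fun h => h2 ?_, Or.inl (Or.inr ⟨0, hr, by push_cast; ring⟩)⟩
    have := congrArg (· - v) h
    simpa using this.symm
  have h3 : ∀ v : ZMod (3 * r + 1), c (v + 3) = c v := by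
    intro v
    have h01 := hc v (v + 1) (adj1 v)
    have h12 : c (v + 1) ≠ c (v + 2) := by
      have := hc (v + 1) (v + 1 + 1) (adj1 (v + 1))
      rwa [show v + 1 + 1 = v + 2 by ring] at this
    have h02 := hc v (v + 2) (adj2 v)
    have h13 : c (v + 1) ≠ c (v + 3) := by
      have := hc (v + 1) (v + 1 + 2) (adj2 (v + 1))
      rwa [show v + 1 + 2 = v + 3 by ring] at this
    have h23 : c (v + 2) ≠ c (v + 3) := by
      have := hc (v + 2) (v + 2 + 1) (adj1 (v + 2))
      rwa [show v + 2 + 1 = v + 3 by ring] at this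
    exact fin3_aux (c v) (c (v + 1)) (c (v + 2)) (c (v + 3)) h01 h02 h12 h13.symm h23.symm
  have hmul : ∀ (k : ℕ) (v : ZMod (3 * r + 1)), c (v + 3 * (k : ZMod (3 * r + 1))) = c v := by
    intro k
    induction k with
    | zero => intro v; simp
    | succ n ih =>
      intro v
      have : (v + 3 * ((n + 1 : ℕ) : ZMod (3 * r + 1))) = (v + 3 * (n : ℕ)) + 3 := by
        push_cast; ring
      rw [this, h3, ih]
  have hconst : ∀ x : ZMod (3 * r + 1), c x = c 0 := by
    intro x
    have key : (3 : ZMod (3 * r + 1)) * (((2 * r + 1) * x.val : ℕ) : ZMod (3 * r + 1)) = x := by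
      push_cast
      have h1 : ((3 * (2 * r + 1) : ℕ) : ZMod (3 * r + 1)) = 1 := by
        have e : (3 * (2 * r + 1) : ℕ) = 2 * (3 * r + 1) + 1 := by ring
        rw [e, Nat.cast_add, Nat.cast_mul, ZMod.natCast_self, mul_zero, zero_add, Nat.cast_one]
      push_cast at h1
      calc (3 : ZMod (3 * r + 1)) * ((2 * (r : ZMod (3*r+1)) + 1) * (x.val : ZMod (3*r+1)))
          = (3 * (2 * (r : ZMod (3*r+1)) + 1)) * (x.val : ZMod (3*r+1)) := by ring
        _ = 1 * (x.val : ZMod (3*r+1)) := by rw [h1]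
        _ = x := by rw [one_mul, ZMod.natCast_val, ZMod.cast_id]
    have := hmul ((2 * r + 1) * x.val) 0
    rwa [zero_add, key] at this
  have := hc 0 (0 + 1) (adj1 0)
  rw [hconst (0 + 1)] at this
  exact this rfl
end

section
/- For every r ≥ 1, the graph G_r on vertices v_0, …, v_{3r} (indices mod 3r+1, with v_i adjacent to v_{i±1} and to v_{i+3j+2} for 0 ≤ j ≤ r−1) is 4-vertex-critical: it is not 3-colorable, but for every vertex v, the induced subgraph G_r \ v is 3-colorable. -/
lemma pok_val_add (r : ℕ) (x : ZMod (3 * r + 1)) (d : ℕ) :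
    (x + (d : ZMod (3 * r + 1))).val = (x.val + d) % (3 * r + 1) := by
  rw [ZMod.val_add, ZMod.val_natCast, Nat.add_mod_mod]

lemma pok_fin3 (a b c d : Fin 3) (h1 : a ≠ b) (h2 : a ≠ c) (h3 : b ≠ c) (h4 : d ≠ b)
    (h5 : d ≠ c) : d = a := by
  fin_cases a <;> fin_cases b <;> fin_cases c <;> fin_cases d <;> simp_all

lemma pok_key (r : ℕ) (hr : 1 ≤ r) (x y : ZMod (3 * r + 1))
    (hx : x ≠ 0) (hy : y ≠ 0)
    (h : y = x + 1 ∨ ∃ j : ℕ, j < r ∧ y = x + (3 * j + 2)) :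
    y.val % 3 ≠ x.val % 3 := by
  have hxv : x.val < 3 * r + 1 := ZMod.val_lt x
  have hyv : y.val < 3 * r + 1 := ZMod.val_lt y
  have hx0 : x.val ≠ 0 := fun h0 => hx ((ZMod.val_eq_zero x).mp h0)
  have hy0 : y.val ≠ 0 := fun h0 => hy ((ZMod.val_eq_zero y).mp h0)
  rcases h with h | ⟨j, hj, h⟩
  · have hv : y.val = (x.val + 1) % (3 * r + 1) := by
      rw [h, show (1 : ZMod (3*r+1)) = ((1:ℕ) : ZMod (3*r+1)) by norm_num, pok_val_add]
    rcases Nat.lt_or_ge (x.val + 1) (3 * r + 1) with hlt | hge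
    · rw [Nat.mod_eq_of_lt hlt] at hv; omega
    · have hs : x.val + 1 = 3 * r + 1 := by omega
      rw [hs, Nat.mod_self] at hv; omega
  · have hv : y.val = (x.val + (3 * j + 2)) % (3 * r + 1) := by
      rw [h, show ((3 * (j:ZMod (3*r+1)) + 2)) = ((3*j+2 : ℕ) : ZMod (3*r+1)) by push_cast; ring,
        pok_val_add]
    rcases Nat.lt_or_ge (x.val + (3 * j + 2)) (3 * r + 1) with hlt | hge
    · rw [Nat.mod_eq_of_lt hlt] at hv; omega
    · rw [Nat.mod_eq_sub_mod hge, Nat.mod_eq_of_lt (by omega)] at hv; omega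

theorem stmt_9 (r : ℕ) (hr : 1 ≤ r) :
    (¬ ∃ c : ZMod (3 * r + 1) → Fin 3, ∀ u w, (pokGraph r).Adj u w → c u ≠ c w) ∧
    (∀ v : ZMod (3 * r + 1), ∃ c : ZMod (3 * r + 1) → Fin 3,
      ∀ u w, u ≠ v → w ≠ v → (pokGraph r).Adj u w → c u ≠ c w) := by
  have hne : ∀ a : ℕ, 0 < a → a < 3 * r + 1 → (a : ZMod (3 * r + 1)) ≠ 0 := by
    intro a h0 h1 h
    have h2 := congrArg ZMod.val h
    rw [ZMod.val_natCast, ZMod.val_zero, Nat.mod_eq_of_lt h1] at h2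
    omega
  constructor
  · rintro ⟨c, hc⟩
    have hadj1 : ∀ x : ZMod (3 * r + 1), (pokGraph r).Adj x (x + 1) := by
      intro x
      rw [pokGraph, SimpleGraph.fromRel_adj]
      refine ⟨fun h => ?_, Or.inl (Or.inl rfl)⟩
      have h1 := left_eq_add.mp h
      exact hne 1 one_pos (by omega) (by exact_mod_cast h1)
    have hadj2 : ∀ x : ZMod (3 * r + 1), (pokGraph r).Adj x (x + 2) := by
      intro x
      rw [pokGraph, SimpleGraph.fromRel_adj]
      refine ⟨fun h => ?_, Or.inl (Or.inr ⟨0, hr, by norm_num⟩)⟩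
      have h1 := left_eq_add.mp h
      exact hne 2 (by omega) (by omega) (by exact_mod_cast h1)
    have hstep : ∀ x : ZMod (3 * r + 1), c (x + 3) = c x := by
      intro x
      have h01 := hc _ _ (hadj1 x)
      have h02 := hc _ _ (hadj2 x)
      have h12 := hc _ _ (hadj1 (x + 1))
      rw [show x + 1 + 1 = x + 2 by ring] at h12
      have h13 := hc _ _ (hadj2 (x + 1))
      rw [show x + 1 + 2 = x + 3 by ring] at h13
      have h23 := hc _ _ (hadj1 (x + 2))
      rw [show x + 2 + 1 = x + 3 by ring] at h23
      exact pok_fin3 (c x) (c (x + 1)) (c (x + 2)) (c (x + 3)) h01 h02 h12 h13.symm h23.symm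
    have hper : ∀ k : ℕ, c ((3 * k : ℕ) : ZMod (3 * r + 1)) = c 0 := by
      intro k
      induction k with
      | zero => norm_num
      | succ k ih =>
        have he : ((3 * (k + 1) : ℕ) : ZMod (3 * r + 1))
            = ((3 * k : ℕ) : ZMod (3 * r + 1)) + 3 := by push_cast; ring
        rw [he, hstep, ih]
    have hadj0 : (pokGraph r).Adj ((3 * r : ℕ) : ZMod (3 * r + 1)) 0 := by
      rw [pokGraph, SimpleGraph.fromRel_adj]
      refine ⟨hne (3 * r) (by omega) (by omega), Or.inl (Or.inl ?_)⟩
      have h2 : ((3 * r : ℕ) : ZMod (3 * r + 1)) + 1 = 0 := by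
        have h3 := ZMod.natCast_self (3 * r + 1)
        push_cast at h3 ⊢
        linear_combination h3
      exact h2.symm
    exact hc _ _ hadj0 (hper r)
  · intro v
    refine ⟨fun x => ⟨(x - v).val % 3, Nat.mod_lt _ (by norm_num)⟩, ?_⟩
    intro u w hu hw hadj hcc
    rw [pokGraph, SimpleGraph.fromRel_adj] at hadj
    obtain ⟨hne', hrel⟩ := hadj
    have hu0 : u - v ≠ 0 := sub_ne_zero.mpr hu
    have hw0 : w - v ≠ 0 := sub_ne_zero.mpr hw
    have hval : (u - v).val % 3 = (w - v).val % 3 := congrArg Fin.val hcc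
    rcases hrel with h | h
    · refine pok_key r hr (u - v) (w - v) hu0 hw0 ?_ hval.symm
      rcases h with h | ⟨j, hj, h⟩
      · exact Or.inl (by rw [h]; ring)
      · exact Or.inr ⟨j, hj, by rw [h]; ring⟩
    · refine pok_key r hr (w - v) (u - v) hw0 hu0 ?_ hval
      rcases h with h | ⟨j, hj, h⟩
      · exact Or.inl (by rw [h]; ring)
      · exact Or.inr ⟨j, hj, by rw [h]; ring⟩
end

section
/- For every r ≥ 1, the graph G_r (vertices v_0,…,v_{3r}, indices mod 3r+1, v_i adjacent to v_{i±1} and to v_{i+3j+2} for 0 ≤ j ≤ r−1) contains no induced subgraph isomorphic to 2P2+P1, the disjoint union of two single edges and one isolated vertex. -/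
/-- `2P2 + P1`: the disjoint union of two edges and an isolated vertex. -/
def twoP2P1 : SimpleGraph (Fin 5) :=
  SimpleGraph.fromRel (fun a b => (a = 0 ∧ b = 1) ∨ (a = 2 ∧ b = 3))

instance : DecidableRel twoP2P1.Adj := fun a b =>
  decidable_of_iff' _ (SimpleGraph.fromRel_adj _ a b)

/-- The edge condition on the difference `d = (y - x).val`. -/
def econd (r d : ℕ) : Prop := d = 1 ∨ d = 3 * r ∨ d % 3 = 2

/-- Symmetric edge condition in terms of two representatives. -/
def edgeN (r s t : ℕ) : Prop :=
  (s < t ∧ econd r (t - s)) ∨ (t < s ∧ econd r (s - t))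

lemma valcast_iff (r : ℕ) (z : ZMod (3 * r + 1)) (c : ℕ) (hc : c < 3 * r + 1) :
    z.val = c ↔ z = (c : ZMod (3 * r + 1)) := by
  constructor
  · intro h
    apply ZMod.val_injective
    rw [ZMod.val_cast_of_lt hc, h]
  · intro h
    rw [h, ZMod.val_cast_of_lt hc]

lemma pok_adj_iff (r : ℕ) (hr : 1 ≤ r) (x y : ZMod (3 * r + 1)) :
    (pokGraph r).Adj x y ↔ x ≠ y ∧ econd r ((y - x).val) := by
  rw [pokGraph, SimpleGraph.fromRel_adj]
  have hd : (y - x).val < 3 * r + 1 := ZMod.val_lt _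
  have h0 : (3 * (r : ZMod (3 * r + 1)) + 1 : ZMod (3 * r + 1)) = 0 := by
    have := ZMod.natCast_self (3 * r + 1)
    push_cast at this
    linear_combination this
  unfold econd
  constructor
  · rintro ⟨hne, h⟩
    refine ⟨hne, ?_⟩
    rcases h with (h1 | ⟨j, hj, hje⟩) | (h1 | ⟨j, hj, hje⟩)
    · left
      rw [valcast_iff r _ 1 (by omega)]
      rw [h1]; push_cast; ring
    · right; right
      have : (y - x).val = 3 * j + 2 := by
        rw [valcast_iff r _ (3 * j + 2) (by omega), hje]; push_cast; ring
      omega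
    · right; left
      rw [valcast_iff r _ (3 * r) (by omega)]
      rw [h1]
      push_cast
      linear_combination -h0
    · right; right
      have hlt : 3 * r - 3 * j - 1 < 3 * r + 1 := by omega
      have hmod : (y - x).val = 3 * r - 3 * j - 1 := by
        rw [valcast_iff r _ _ hlt]
        have hc0 : ((3 * r - 3 * j - 1 : ℕ) : ZMod (3 * r + 1))
            + ((3 * j + 2 : ℕ) : ZMod (3 * r + 1)) = 0 := by
          rw [← Nat.cast_add, (by omega : (3 * r - 3 * j - 1) + (3 * j + 2) = 3 * r + 1),
            ZMod.natCast_self]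
        rw [hje]
        push_cast at hc0 ⊢
        linear_combination -hc0
      omega
  · rintro ⟨hne, h⟩
    refine ⟨hne, ?_⟩
    have hne0 : (y - x).val ≠ 0 := by
      rw [Ne, ZMod.val_eq_zero, sub_eq_zero]
      exact fun h' => hne h'.symm
    rcases h with h1 | h3r | hm
    · left; left
      rw [valcast_iff r _ 1 (by omega)] at h1
      push_cast at h1
      linear_combination h1
    · right; left
      rw [valcast_iff r _ (3 * r) (by omega)] at h3r
      push_cast at h3r
      linear_combination -h3r - h0
    · left; right
      have h3rne : (y - x).val ≠ 3 * r := by omega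
      refine ⟨((y - x).val - 2) / 3, by omega, ?_⟩
      have hv : (y - x).val = 3 * (((y - x).val - 2) / 3) + 2 := by omega
      rw [valcast_iff r _ _ (by omega)] at hv
      push_cast at hv
      linear_combination hv

lemma pok_adj_iff' (r : ℕ) (hr : 1 ≤ r) (e x y : ZMod (3 * r + 1)) (hxy : x ≠ y) :
    (pokGraph r).Adj x y ↔ edgeN r ((x - e).val) ((y - e).val) := by
  rw [pok_adj_iff r hr]
  have hs : (x - e).val < 3 * r + 1 := ZMod.val_lt _
  have ht : (y - e).val < 3 * r + 1 := ZMod.val_lt _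
  have hst : (x - e).val ≠ (y - e).val := by
    intro h
    exact hxy (sub_left_inj.mp (ZMod.val_injective _ h))
  rcases lt_or_gt_of_ne hst with h | h
  · have hv : (y - x).val = (y - e).val - (x - e).val := by
      rw [(by ring : y - x = (y - e) - (x - e)), ZMod.val_sub (le_of_lt h)]
    rw [hv]
    unfold edgeN econd
    constructor
    · rintro ⟨-, hc⟩; omega
    · intro hc; exact ⟨hxy, by omega⟩
  · have h1 : (x - y).val = (x - e).val - (y - e).val := by
      rw [(by ring : x - y = (x - e) - (y - e)), ZMod.val_sub (le_of_lt h)]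
    have hne : x - y ≠ 0 := sub_ne_zero.mpr hxy
    haveI : NeZero (x - y) := ⟨hne⟩
    have h2 : (y - x).val = (3 * r + 1) - ((x - e).val - (y - e).val) := by
      rw [(by ring : y - x = -(x - y)), ZMod.val_neg_of_ne_zero, h1]
    rw [h2]
    unfold edgeN econd
    constructor
    · rintro ⟨-, hc⟩; omega
    · intro hc; exact ⟨hxy, by omega⟩

lemma resid (r t : ℕ) (h : ¬ econd r t) : t % 3 = 0 ∨ t % 3 = 1 := by
  unfold econd at h; omega

lemma edge_char (r u v : ℕ) (hu : ¬ econd r u) (bu : u < 3 * r + 1) (zu : u ≠ 0)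
    (hv : ¬ econd r v) (bv : v < 3 * r + 1) (zv : v ≠ 0) (E : edgeN r u v) :
    (u < v ∧ ((u % 3 = 1 ∧ v % 3 = 0) ∨ v = u + 1)) ∨
    (v < u ∧ ((v % 3 = 1 ∧ u % 3 = 0) ∨ u = v + 1)) := by
  unfold edgeN econd at *; omega

lemma nonedge_char (r u v : ℕ) (N : ¬ edgeN r u v) :
    (u < v → ¬(u % 3 = 1 ∧ v % 3 = 0) ∧ v ≠ u + 1) ∧
    (v < u → ¬(v % 3 = 1 ∧ u % 3 = 0) ∧ u ≠ v + 1) := by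
  unfold edgeN econd at N; omega

lemma consec (u v : ℕ) (hm : u % 3 = 0 ∨ u % 3 = 1) (hm' : v % 3 = 0 ∨ v % 3 = 1)
    (h : v = u + 1) : u % 3 = 0 ∧ v % 3 = 1 := by omega

set_option maxHeartbeats 1000000 in
lemma core (u1 v1 u2 v2 : ℕ)
    (m1 : u1 % 3 = 0 ∨ u1 % 3 = 1) (m2 : v1 % 3 = 0 ∨ v1 % 3 = 1)
    (m3 : u2 % 3 = 0 ∨ u2 % 3 = 1) (m4 : v2 % 3 = 0 ∨ v2 % 3 = 1)
    (o1 : u1 < v1) (o2 : u2 < v2)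
    (h1 : (u1 % 3 = 1 ∧ v1 % 3 = 0) ∨ v1 = u1 + 1)
    (h2 : (u2 % 3 = 1 ∧ v2 % 3 = 0) ∨ v2 = u2 + 1)
    (Fuu : (u1 < u2 → ¬(u1 % 3 = 1 ∧ u2 % 3 = 0) ∧ u2 ≠ u1 + 1) ∧
      (u2 < u1 → ¬(u2 % 3 = 1 ∧ u1 % 3 = 0) ∧ u1 ≠ u2 + 1))
    (Fuv : (u1 < v2 → ¬(u1 % 3 = 1 ∧ v2 % 3 = 0) ∧ v2 ≠ u1 + 1) ∧
      (v2 < u1 → ¬(v2 % 3 = 1 ∧ u1 % 3 = 0) ∧ u1 ≠ v2 + 1))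
    (Fvu : (v1 < u2 → ¬(v1 % 3 = 1 ∧ u2 % 3 = 0) ∧ u2 ≠ v1 + 1) ∧
      (u2 < v1 → ¬(u2 % 3 = 1 ∧ v1 % 3 = 0) ∧ v1 ≠ u2 + 1))
    (Fvv : (v1 < v2 → ¬(v1 % 3 = 1 ∧ v2 % 3 = 0) ∧ v2 ≠ v1 + 1) ∧
      (v2 < v1 → ¬(v2 % 3 = 1 ∧ v1 % 3 = 0) ∧ v1 ≠ v2 + 1))
    (duu : u1 ≠ u2) (duv : u1 ≠ v2) (dvu : v1 ≠ u2) (dvv : v1 ≠ v2) : False := by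
  rcases h1 with ⟨p1, q1⟩ | h1
  · rcases h2 with ⟨p2, q2⟩ | h2
    · clear m1 m2 m3 m4; omega
    · obtain ⟨p2, q2⟩ := consec u2 v2 m3 m4 h2
      clear m1 m2 m3 m4; omega
  · obtain ⟨p1, q1⟩ := consec u1 v1 m1 m2 h1
    rcases h2 with ⟨p2, q2⟩ | h2
    · clear m1 m2 m3 m4; omega
    · obtain ⟨p2, q2⟩ := consec u2 v2 m3 m4 h2
      clear m1 m2 m3 m4; omega

lemma finalArith (r t0 t1 t2 t3 : ℕ) (hr : 1 ≤ r)
    (z0 : t0 ≠ 0) (b0 : t0 < 3 * r + 1) (c0 : ¬ econd r t0)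
    (z1 : t1 ≠ 0) (b1 : t1 < 3 * r + 1) (c1 : ¬ econd r t1)
    (z2 : t2 ≠ 0) (b2 : t2 < 3 * r + 1) (c2 : ¬ econd r t2)
    (z3 : t3 ≠ 0) (b3 : t3 < 3 * r + 1) (c3 : ¬ econd r t3)
    (d02 : t0 ≠ t2) (d03 : t0 ≠ t3) (d12 : t1 ≠ t2) (d13 : t1 ≠ t3)
    (E01 : edgeN r t0 t1) (E23 : edgeN r t2 t3)
    (N02 : ¬ edgeN r t0 t2) (N03 : ¬ edgeN r t0 t3)
    (N12 : ¬ edgeN r t1 t2) (N13 : ¬ edgeN r t1 t3) : False := by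
  have m0 := resid r t0 c0
  have m1 := resid r t1 c1
  have m2 := resid r t2 c2
  have m3 := resid r t3 c3
  have G01 := edge_char r t0 t1 c0 b0 z0 c1 b1 z1 E01
  have G23 := edge_char r t2 t3 c2 b2 z2 c3 b3 z3 E23
  have F02 := nonedge_char r t0 t2 N02
  have F03 := nonedge_char r t0 t3 N03
  have F12 := nonedge_char r t1 t2 N12
  have F13 := nonedge_char r t1 t3 N13
  clear E01 E23 N02 N03 N12 N13 c0 c1 c2 c3
  rcases G01 with ⟨o1, h1⟩ | ⟨o1, h1⟩ <;> rcases G23 with ⟨o2, h2⟩ | ⟨o2, h2⟩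
  · exact core t0 t1 t2 t3 m0 m1 m2 m3 o1 o2 h1 h2 F02 F03 F12 F13 d02 d03 d12 d13
  · exact core t0 t1 t3 t2 m0 m1 m3 m2 o1 o2 h1 h2 F03 F02 F13 F12 d03 d02 d13 d12
  · exact core t1 t0 t2 t3 m1 m0 m2 m3 o1 o2 h1 h2 F12 F13 F02 F03 d12 d13 d02 d03
  · exact core t1 t0 t3 t2 m1 m0 m3 m2 o1 o2 h1 h2 F13 F12 F03 F02 d13 d12 d03 d02

theorem stmt_10 (r : ℕ) (hr : 1 ≤ r) :
    ¬ Nonempty (twoP2P1 ↪g pokGraph r) := by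
  rintro ⟨f⟩
  have hne : ∀ i j : Fin 5, i ≠ j → f i ≠ f j := fun i j h hf => h (f.injective hf)
  set e : ZMod (3 * r + 1) := f 4 with he
  have ccond : ∀ i : Fin 5, ¬ twoP2P1.Adj 4 i → i ≠ 4 → ¬ econd r ((f i - e).val) := by
    intro i hna hi4 hc
    exact hna (f.map_adj_iff.mp
      ((pok_adj_iff r hr (f 4) (f i)).mpr ⟨hne 4 i (Ne.symm hi4), hc⟩))
  have zcond : ∀ i : Fin 5, i ≠ 4 → (f i - e).val ≠ 0 := by
    intro i hi4
    rw [Ne, ZMod.val_eq_zero, sub_eq_zero]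
    exact hne i 4 hi4
  have dcond : ∀ i j : Fin 5, i ≠ j → (f i - e).val ≠ (f j - e).val := by
    intro i j hij h
    exact hne i j hij (sub_left_inj.mp (ZMod.val_injective _ h))
  have E01 : edgeN r ((f 0 - e).val) ((f 1 - e).val) :=
    (pok_adj_iff' r hr e (f 0) (f 1) (hne 0 1 (by decide))).mp
      (f.map_adj_iff.mpr (by decide))
  have E23 : edgeN r ((f 2 - e).val) ((f 3 - e).val) :=
    (pok_adj_iff' r hr e (f 2) (f 3) (hne 2 3 (by decide))).mp
      (f.map_adj_iff.mpr (by decide))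
  have N02 : ¬ edgeN r ((f 0 - e).val) ((f 2 - e).val) := fun h =>
    (by decide : ¬ twoP2P1.Adj 0 2) (f.map_adj_iff.mp
      ((pok_adj_iff' r hr e (f 0) (f 2) (hne 0 2 (by decide))).mpr h))
  have N03 : ¬ edgeN r ((f 0 - e).val) ((f 3 - e).val) := fun h =>
    (by decide : ¬ twoP2P1.Adj 0 3) (f.map_adj_iff.mp
      ((pok_adj_iff' r hr e (f 0) (f 3) (hne 0 3 (by decide))).mpr h))
  have N12 : ¬ edgeN r ((f 1 - e).val) ((f 2 - e).val) := fun h =>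
    (by decide : ¬ twoP2P1.Adj 1 2) (f.map_adj_iff.mp
      ((pok_adj_iff' r hr e (f 1) (f 2) (hne 1 2 (by decide))).mpr h))
  have N13 : ¬ edgeN r ((f 1 - e).val) ((f 3 - e).val) := fun h =>
    (by decide : ¬ twoP2P1.Adj 1 3) (f.map_adj_iff.mp
      ((pok_adj_iff' r hr e (f 1) (f 3) (hne 1 3 (by decide))).mpr h))
  exact finalArith r ((f 0 - e).val) ((f 1 - e).val) ((f 2 - e).val) ((f 3 - e).val) hr
    (zcond 0 (by decide)) (ZMod.val_lt _) (ccond 0 (by decide) (by decide))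
    (zcond 1 (by decide)) (ZMod.val_lt _) (ccond 1 (by decide) (by decide))
    (zcond 2 (by decide)) (ZMod.val_lt _) (ccond 2 (by decide) (by decide))
    (zcond 3 (by decide)) (ZMod.val_lt _) (ccond 3 (by decide) (by decide))
    (dcond 0 2 (by decide)) (dcond 0 3 (by decide)) (dcond 1 2 (by decide))
    (dcond 1 3 (by decide)) E01 E23 N02 N03 N12 N13
end

section
/- For every r ≥ 1, let H_r be the graph on vertices v_1,…,v_{3r−1} with path edges v_i v_{i+1} for 1 ≤ i ≤ 3r−2, and additional edges v_i v_j whenever i ≤ j−2, i ≡ 2 (mod 3), and j ≡ 1 (mod 3). Define lists by L(v_1) = L(v_{3r−1}) = {1}, and for 2 ≤ i ≤ 3r−2: L(v_i) = {2,3} if i ≡ 0 (mod 3), L(v_i) = {1,3} if i ≡ 1 (mod 3), L(v_i) = {1,2} if i ≡ 2 (mod 3). Then (H_r, L) has no L-coloring, i.e., no proper coloring c with c(v) ∈ L(v) for all v. -/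
/-- The graph `H_r` on vertices `v_1, …, v_{3r-1}`, encoded on `Fin (3r-1)` where
index `a` stands for `v_{a+1}`.  There are path edges `v_i v_{i+1}` and chords
`v_i v_j` for `i ≤ j - 2`, `i ≡ 2 (mod 3)`, `j ≡ 1 (mod 3)`. -/
def obstGraph (r : ℕ) : SimpleGraph (Fin (3 * r - 1)) :=
  SimpleGraph.fromRel (fun a b =>
    a.val + 1 = b.val ∨ (a.val + 2 ≤ b.val ∧ a.val % 3 = 1 ∧ b.val % 3 = 0))

/-- The lists for `H_r` (index `a` stands for `v_{a+1}`):
`L(v_1) = L(v_{3r-1}) = {1}`, and for `2 ≤ i ≤ 3r-2`: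
`{2,3}` if `i ≡ 0`, `{1,3}` if `i ≡ 1`, `{1,2}` if `i ≡ 2 (mod 3)`. -/
def obstList (r : ℕ) (a : Fin (3 * r - 1)) : Finset ℕ :=
  if a.val = 0 ∨ a.val = 3 * r - 2 then {1}
  else if (a.val + 1) % 3 = 0 then {2, 3}
  else if (a.val + 1) % 3 = 1 then {1, 3}
  else {1, 2}

theorem stmt_11 (r : ℕ) (hr : 1 ≤ r) :
    ¬ ∃ c : Fin (3 * r - 1) → ℕ, (∀ v, c v ∈ obstList r v) ∧
      ∀ u w, (obstGraph r).Adj u w → c u ≠ c w := by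
  rintro ⟨c, hmem, hadj⟩
  -- step adjacency
  have adjstep : ∀ (k : ℕ) (hk : k + 1 < 3 * r - 1),
      (obstGraph r).Adj ⟨k, by omega⟩ ⟨k + 1, hk⟩ := by
    intro k hk
    refine ⟨?_, Or.inl (Or.inl rfl)⟩
    simp [Fin.ext_iff]
  -- the colors are forced along the path
  have key : ∀ k (hk : k < 3 * r - 2), c ⟨k, by omega⟩ = k % 3 + 1 := by
    intro k
    induction k with
    | zero =>
      intro hk
      have hm := hmem ⟨0, by omega⟩
      simp [obstList] at hm
      simpa using hm
    | succ k ih =>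
      intro hk
      have ihk := ih (by omega)
      have hne' : c ⟨k, by omega⟩ ≠ c ⟨k + 1, by omega⟩ :=
        hadj _ _ (adjstep k (by omega))
      have hm := hmem ⟨k + 1, by omega⟩
      simp only [obstList, show ¬(k + 1 = 0 ∨ k + 1 = 3 * r - 2) from by omega,
        if_false] at hm
      rcases (show k % 3 = 0 ∨ k % 3 = 1 ∨ k % 3 = 2 by omega) with h | h | h
      · simp only [show (k + 1 + 1) % 3 = 2 from by omega] at hm
        norm_num at hm
        omega
      · simp only [show (k + 1 + 1) % 3 = 0 from by omega] at hm
        norm_num at hm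
        omega
      · simp only [show (k + 1 + 1) % 3 = 1 from by omega] at hm
        norm_num at hm
        omega
  -- final contradiction at index 3r-2
  have hlast := hmem ⟨3 * r - 2, by omega⟩
  simp only [obstList, show (3 * r - 2 = 0 ∨ 3 * r - 2 = 3 * r - 2) from by omega,
    if_true] at hlast
  have hlast1 : c ⟨3 * r - 2, by omega⟩ = 1 := by simpa using hlast
  have hprev := key (3 * r - 3) (by omega)
  have hadj' : c ⟨3 * r - 3, by omega⟩ ≠ c ⟨3 * r - 2, by omega⟩ := by
    have := adjstep (3 * r - 3) (by omega)
    have he : (⟨3 * r - 3 + 1, by omega⟩ : Fin (3 * r - 1)) = ⟨3 * r - 2, by omega⟩ := by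
      simp [Fin.ext_iff]; omega
    exact he ▸ hadj _ _ this
  rw [hprev, hlast1, show (3 * r - 3) % 3 = 0 by omega] at hadj'
  exact hadj' rfl
end

section
/- For every r ≥ 1, the graph H_r defined on v_1,…,v_{3r−1} with path edges v_i v_{i+1} and chords v_i v_j for i ≤ j−2, i ≡ 2 (mod 3), j ≡ 1 (mod 3), together with the lists L(v_1)=L(v_{3r−1})={1}, L(v_i)={2,3} for i ≡ 0 (mod 3), L(v_i)={1,3} for i ≡ 1 (mod 3) (2 ≤ i ≤ 3r−2), L(v_i)={1,2} for i ≡ 2 (mod 3), forms a minimal list-obstruction: (H_r,L) has no L-coloring, but for every vertex v, the pair (H_r \ v, L) has an L-coloring. -/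
theorem stmt_12 (r : ℕ) (hr : 1 ≤ r) :
    (¬ ∃ c : Fin (3 * r - 1) → ℕ, (∀ v, c v ∈ obstList r v) ∧
      ∀ u w, (obstGraph r).Adj u w → c u ≠ c w) ∧
    (∀ v : Fin (3 * r - 1), ∃ c : Fin (3 * r - 1) → ℕ,
      (∀ u, u ≠ v → c u ∈ obstList r u) ∧
      ∀ u w, u ≠ v → w ≠ v → (obstGraph r).Adj u w → c u ≠ c w) := by
  constructor
  · rintro ⟨c, hmem, hcol⟩
    have key : ∀ a : ℕ, ∀ h : a < 3 * r - 1, a < 3 * r - 2 → c ⟨a, h⟩ = a % 3 + 1 := by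
      intro a
      induction a using Nat.strong_induction_on with
      | _ a ih =>
        intro h hlt
        by_cases ha : a = 0
        · subst ha
          have hm := hmem ⟨0, h⟩
          simp [obstList] at hm
          simpa using hm
        · obtain ⟨b, rb⟩ := Nat.exists_eq_succ_of_ne_zero ha
          subst rb
          simp only [Nat.succ_eq_add_one] at hlt ⊢
          have hb : b < 3 * r - 1 := by omega
          have ihb := ih b (by omega) hb (by omega)
          have adj : (obstGraph r).Adj ⟨b, hb⟩ ⟨b + 1, h⟩ := by
            rw [obstGraph, SimpleGraph.fromRel_adj]
            refine ⟨by simp [Fin.ext_iff], Or.inl (Or.inl rfl)⟩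
          have hne := hcol _ _ adj
          have hm := hmem ⟨b + 1, h⟩
          simp only [obstList, Fin.val_mk] at hm
          split_ifs at hm <;> simp at hm <;> (try simp only [false_or] at *) <;> omega
    have h2 : 3 * r - 2 < 3 * r - 1 := by omega
    have h1 : 3 * r - 3 < 3 * r - 1 := by omega
    have e1 := key (3 * r - 3) h1 (by omega)
    have hm := hmem ⟨3 * r - 2, h2⟩
    simp [obstList] at hm
    have adj : (obstGraph r).Adj ⟨3 * r - 3, h1⟩ ⟨3 * r - 2, h2⟩ := by
      rw [obstGraph, SimpleGraph.fromRel_adj]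
      refine ⟨by simp [Fin.ext_iff]; omega, Or.inl (Or.inl (show 3 * r - 3 + 1 = 3 * r - 2 by omega))⟩
    have := hcol _ _ adj
    omega
  · intro v
    refine ⟨fun a => if a.val < v.val then a.val % 3 + 1 else (a.val + 2) % 3 + 1, ?_, ?_⟩
    · intro u hu
      have huv : u.val ≠ v.val := fun h => hu (Fin.ext h)
      have hub : u.val < 3 * r - 1 := u.isLt
      have hvb : v.val < 3 * r - 1 := v.isLt
      simp only [obstList]
      split_ifs <;> simp <;> omega
    · intro u w hu hw hadj
      rw [obstGraph, SimpleGraph.fromRel_adj] at hadj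
      obtain ⟨hne, hrel⟩ := hadj
      have h1 : u.val ≠ w.val := fun h => hne (Fin.ext h)
      have h2 : u.val ≠ v.val := fun h => hu (Fin.ext h)
      have h3 : w.val ≠ v.val := fun h => hw (Fin.ext h)
      simp only []
      split_ifs <;> rcases hrel with (h | ⟨ha, hb', hc⟩) | (h | ⟨ha, hb', hc⟩) <;> omega
end

section
/- Let G be a P4+kP1-free graph (for some k ≥ 1) that contains an induced path v_1-v_2-v_3-v_4 on 4 vertices. Let R = V(G) \ (N[v_1] ∪ N[v_2] ∪ N[v_3] ∪ N[v_4]) and let S be a maximal stable set in G|R. Then |S| ≤ k−1, and consequently {v_1,v_2,v_3,v_4} ∪ S is a dominating set of G of size at most k+3. -/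
/-! If `S` had `k` vertices, then, lying in `R`, they would be distinct from and anticomplete to
the induced path `v₁v₂v₃v₄`; being stable, they would together with the path induce `P4 + kP1`.
A vertex outside `{v₁, v₂, v₃, v₄} ∪ S` either has a neighbour on the path or lies in `R`, where
maximality of `S` gives it a neighbour in `S`. -/

/-- `P4 + kP1`: a path on four vertices together with `k` isolated vertices. -/
def P4kP1 (k : ℕ) : SimpleGraph (Fin (4 + k)) :=
  SimpleGraph.fromRel (fun a b => a.val + 1 = b.val ∧ b.val < 4)

open SimpleGraph

theorem Set.nonempty_fin_embedding_of_le_ncard {U : Type*} {s : Set U} {n : ℕ}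
    (h : n ≤ s.ncard) : Nonempty (Fin n ↪ s) := by
  obtain ⟨e, -⟩ := Fin.Embedding.exists_embedding_disjoint_range_of_add_le_ENat_card
    (α := s) (s := ∅) (n := n) (by simpa using (Nat.cast_le.2 h).trans s.ncard_le_encard)
  exact ⟨e⟩

def P4kP1.isoSum (k : ℕ) : pathGraph 4 ⊕g (⊥ : SimpleGraph (Fin k)) ≃g P4kP1 k where
  toEquiv := finSumFinEquiv
  map_rel_iff' {a b} := by
    rcases a with i | i <;> rcases b with j | j <;>
      simp [P4kP1, pathGraph_adj, Fin.ext_iff] <;> omega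

namespace SimpleGraph
variable {U V W : Type*} {G : SimpleGraph U}

def IsIndepSet.botEmbedding {s : Set U} (hs : G.IsIndepSet s) (e : W ↪ s) :
    (⊥ : SimpleGraph W) ↪g G where
  toFun i := e i
  inj' := Subtype.val_injective.comp e.injective
  map_rel_iff' {i j} := by
    simp only [Function.Embedding.coeFn_mk, bot_adj, iff_false]
    exact fun h => hs (e i).2 (e j).2 (fun hij => h.ne hij) h

section InducedPath
variable {v₁ v₂ v₃ v₄ : U}

theorem injective_vecCons_of_inducedPath (h12 : G.Adj v₁ v₂) (h23 : G.Adj v₂ v₃)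
    (h34 : G.Adj v₃ v₄) (h13 : ¬ G.Adj v₁ v₃) (h14 : ¬ G.Adj v₁ v₄) :
    Function.Injective ![v₁, v₂, v₃, v₄] := by
  have d13 : v₁ ≠ v₃ := by rintro rfl; exact h14 h34
  have d14 : v₁ ≠ v₄ := by rintro rfl; exact h13 h34.symm
  have d24 : v₂ ≠ v₄ := by rintro rfl; exact h14 h12
  intro i j
  fin_cases i <;> fin_cases j <;> simp [h12.ne, h23.ne, h34.ne, d13, d14, d24, eq_comm]

variable (h12 : G.Adj v₁ v₂) (h23 : G.Adj v₂ v₃) (h34 : G.Adj v₃ v₄)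
  (h13 : ¬ G.Adj v₁ v₃) (h14 : ¬ G.Adj v₁ v₄) (h24 : ¬ G.Adj v₂ v₄)

def pathGraphFourEmbedding : pathGraph 4 ↪g G where
  toFun := ![v₁, v₂, v₃, v₄]
  inj' := injective_vecCons_of_inducedPath h12 h23 h34 h13 h14
  map_rel_iff' {i j} := by
    change G.Adj (![v₁, v₂, v₃, v₄] i) (![v₁, v₂, v₃, v₄] j) ↔ _
    fin_cases i <;> fin_cases j <;>
      simp [pathGraph_adj, h12, h23, h34, h13, h14, h24, h12.symm, h23.symm, h34.symm,
        G.adj_comm v₃ v₁, G.adj_comm v₄ v₁, G.adj_comm v₄ v₂]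

theorem pathGraphFourEmbedding_mem (i : Fin 4) :
    pathGraphFourEmbedding h12 h23 h34 h13 h14 h24 i ∈ ({v₁, v₂, v₃, v₄} : Set U) := by
  change ![v₁, v₂, v₃, v₄] i ∈ _
  fin_cases i <;> simp

end InducedPath

def Embedding.sumElim {H : SimpleGraph V} {K : SimpleGraph W} (f : G ↪g K) (g : H ↪g K)
    (hne : ∀ u v, f u ≠ g v) (hadj : ∀ u v, ¬ K.Adj (f u) (g v)) : G ⊕g H ↪g K where
  toFun := Sum.elim f g
  inj' := f.injective.sumElim g.injective hne
  map_rel_iff' {a b} := by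
    rcases a with u | v <;> rcases b with u' | v'
    · simp
    · simpa using hadj u v'
    · simpa [K.adj_comm] using hadj u' v
    · simp

theorem exists_adj_of_notMem_union {P S : Set U}
    (hmax : ∀ w, (∀ u ∈ P, w ≠ u ∧ ¬ G.Adj u w) → w ∉ S → ∃ s ∈ S, G.Adj w s)
    {w : U} (hw : w ∉ P ∪ S) : ∃ d ∈ P ∪ S, G.Adj w d := by
  rw [Set.mem_union, not_or] at hw
  by_cases hR : ∀ u ∈ P, w ≠ u ∧ ¬ G.Adj u w
  · obtain ⟨s, hs, hws⟩ := hmax w hR hw.2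
    exact ⟨s, Or.inr hs, hws⟩
  · push Not at hR
    obtain ⟨u, hu, huw⟩ := hR
    exact ⟨u, Or.inl hu, (huw (ne_of_mem_of_not_mem hu hw.1).symm).symm⟩

end SimpleGraph

theorem stmt_14_general {V : Type*} (G : SimpleGraph V) (k : ℕ) (hk : 1 ≤ k)
    (hfree : ¬ Nonempty (P4kP1 k ↪g G))
    (v₁ v₂ v₃ v₄ : V)
    (h12 : G.Adj v₁ v₂) (h23 : G.Adj v₂ v₃) (h34 : G.Adj v₃ v₄)
    (h13 : ¬ G.Adj v₁ v₃) (h14 : ¬ G.Adj v₁ v₄) (h24 : ¬ G.Adj v₂ v₄)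
    (R : Set V) (hR : R = {w | ∀ u ∈ ({v₁, v₂, v₃, v₄} : Set V), w ≠ u ∧ ¬ G.Adj u w})
    (S : Set V) (hSR : S ⊆ R)
    (hstable : ∀ a ∈ S, ∀ b ∈ S, ¬ G.Adj a b)
    (hmax : ∀ w ∈ R, w ∉ S → ∃ s ∈ S, G.Adj w s) :
    S.ncard ≤ k - 1 ∧
    (∀ w ∉ ({v₁, v₂, v₃, v₄} : Set V) ∪ S, ∃ d ∈ ({v₁, v₂, v₃, v₄} : Set V) ∪ S, G.Adj w d) ∧
    (({v₁, v₂, v₃, v₄} : Set V) ∪ S).ncard ≤ k + 3 := by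
  subst hR
  set path := pathGraphFourEmbedding h12 h23 h34 h13 h14 h24
  have hS : ∀ s ∈ S, ∀ i, s ≠ path i ∧ ¬ G.Adj (path i) s :=
    fun s hs i => hSR hs _ (pathGraphFourEmbedding_mem h12 h23 h34 h13 h14 h24 i)
  have hcard : S.ncard ≤ k - 1 := by
    by_contra! hlt
    obtain ⟨e⟩ := Set.nonempty_fin_embedding_of_le_ncard (s := S) (n := k) (by omega)
    have hindep : G.IsIndepSet S := fun a ha b hb _ => hstable a ha b hb
    exact hfree ⟨(path.sumElim (hindep.botEmbedding e) (fun i j => (hS _ (e j).2 i).1.symm)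
      (fun i j => (hS _ (e j).2 i).2)).comp (P4kP1.isoSum k).symm.toEmbedding⟩
  have hpath : ({v₁, v₂, v₃, v₄} : Set V).ncard ≤ 4 := by
    classical
    simpa using (Set.ncard_coe_finset ({v₁, v₂, v₃, v₄} : Finset V)).le.trans
      Finset.card_le_four
  refine ⟨hcard, fun w hw => exists_adj_of_notMem_union hmax hw, ?_⟩
  have := Set.ncard_union_le ({v₁, v₂, v₃, v₄} : Set V) S
  omega

theorem stmt_14 {V : Type*} [Fintype V] (G : SimpleGraph V) (k : ℕ) (hk : 1 ≤ k)
    (hfree : ¬ Nonempty (P4kP1 k ↪g G))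
    (v₁ v₂ v₃ v₄ : V)
    (hdist : [v₁, v₂, v₃, v₄].Pairwise (· ≠ ·))
    (h12 : G.Adj v₁ v₂) (h23 : G.Adj v₂ v₃) (h34 : G.Adj v₃ v₄)
    (h13 : ¬ G.Adj v₁ v₃) (h14 : ¬ G.Adj v₁ v₄) (h24 : ¬ G.Adj v₂ v₄)
    (R : Set V) (hR : R = {w | ∀ u ∈ ({v₁, v₂, v₃, v₄} : Set V), w ≠ u ∧ ¬ G.Adj u w})
    (S : Set V) (hSR : S ⊆ R)
    (hstable : ∀ a ∈ S, ∀ b ∈ S, ¬ G.Adj a b)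
    (hmax : ∀ w ∈ R, w ∉ S → ∃ s ∈ S, G.Adj w s) :
    S.ncard ≤ k - 1 ∧
    (∀ w ∉ ({v₁, v₂, v₃, v₄} : Set V) ∪ S, ∃ d ∈ ({v₁, v₂, v₃, v₄} : Set V) ∪ S, G.Adj w d) ∧
    (({v₁, v₂, v₃, v₄} : Set V) ∪ S).ncard ≤ k + 3 :=
  stmt_14_general G k hk hfree v₁ v₂ v₃ v₄ h12 h23 h34 h13 h14 h24 R hR S hSR hstable hmax
end

section
/- Let (G,L) be a minimal list-obstruction with L(v) ⊆ {1,2,3} and |L(v)| ≤ 2 for all vertices, suppose every list is nonempty, and suppose the set V_1 of vertices with singleton lists has size exactly 2, say V_1 = {x,y} with L(x) = {α} and L(y) = {β}. Then G has a Hamiltonian path from x to y. -/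
open SimpleGraph

section

variable {V : Type*} {G : SimpleGraph V} {L : V → Finset ℕ} {x : V} {α : ℕ}

open Classical in
noncomputable def eraseOnNeighbors (G : SimpleGraph V) (L : V → Finset ℕ) (x : V) (α : ℕ)
    (v : V) : Finset ℕ :=
  if G.Adj x v then (L v).erase α else L v

lemma mem_eraseOnNeighbors {v : V} {a : ℕ} :
    a ∈ eraseOnNeighbors G L x α v ↔ a ∈ L v ∧ (G.Adj x v → a ≠ α) := by
  unfold eraseOnNeighbors
  split_ifs with h <;> simp [h, and_comm]

lemma eraseOnNeighbors_subset (v : V) : eraseOnNeighbors G L x α v ⊆ L v :=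
  fun _ ha => (mem_eraseOnNeighbors.1 ha).1

lemma card_eraseOnNeighbors_le (v : V) : (eraseOnNeighbors G L x α v).card ≤ (L v).card :=
  Finset.card_le_card (eraseOnNeighbors_subset v)

lemma eraseOnNeighbors_of_adj {v : V} (h : G.Adj x v) :
    eraseOnNeighbors G L x α v = (L v).erase α :=
  if_pos h

lemma eraseOnNeighbors_eq_self {v : V} (h : G.Adj x v → α ∉ L v) :
    eraseOnNeighbors G L x α v = L v := by
  ext a
  rw [mem_eraseOnNeighbors]
  exact ⟨And.left, fun ha => ⟨ha, fun hxv hαa => h hxv (hαa ▸ ha)⟩⟩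

lemma listColorableOn_insert_iff {S : Set V} (hx : L x = {α}) (hxS : x ∉ S) :
    ListColorableOn G L (insert x S) ↔ ListColorableOn G (eraseOnNeighbors G L x α) S := by
  classical
  constructor
  · rintro ⟨c, hcL, hc⟩
    have hcx : c x = α := by simpa [hx] using hcL x (Set.mem_insert x S)
    refine ⟨c, fun v hv => mem_eraseOnNeighbors.2 ⟨hcL v (Or.inr hv), fun hxv => ?_⟩,
      fun u hu w hw => hc u (Or.inr hu) w (Or.inr hw)⟩
    exact hcx ▸ (hc x (Set.mem_insert x S) v (Or.inr hv) hxv).symm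
  · rintro ⟨c, hcL, hc⟩
    have hcL' : ∀ v ∈ S, c v ∈ L v := fun v hv => eraseOnNeighbors_subset v (hcL v hv)
    have hcα : ∀ v ∈ S, G.Adj x v → c v ≠ α :=
      fun v hv => (mem_eraseOnNeighbors.1 (hcL v hv)).2
    have hne : ∀ v ∈ S, v ≠ x := fun v hv hvx => hxS (hvx ▸ hv)
    refine ⟨Function.update c x α, ?_, ?_⟩
    · rintro v (rfl | hv)
      · simp [hx]
      · simpa [hne v hv] using hcL' v hv
    · rintro u (rfl | hu) w (rfl | hw) huw
      · exact absurd huw (G.loopless.irrefl _)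
      · simpa [hne w hw] using (hcα w hw huw).symm
      · simpa [hne u hu] using hcα u hu huw.symm
      · simpa [hne u hu, hne w hw] using hc u hu w hw huw

lemma listColorableOn_induce_iff {s : Set V} {T : Set s} :
    ListColorableOn (G.induce s) (fun v => L v) T ↔ ListColorableOn G L (Subtype.val '' T) := by
  classical
  constructor
  · rintro ⟨c, hcL, hc⟩
    refine ⟨fun v => if hv : v ∈ s then c ⟨v, hv⟩ else 0, ?_, ?_⟩
    · rintro _ ⟨v, hv, rfl⟩
      simpa using hcL v hv
    · rintro _ ⟨u, hu, rfl⟩ _ ⟨w, hw, rfl⟩ huw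
      simpa using hc u hu w hw huw
  · rintro ⟨c, hcL, hc⟩
    exact ⟨fun v => c v, fun v hv => hcL v ⟨v, hv, rfl⟩,
      fun u hu w hw huw => hc u ⟨u, hu, rfl⟩ w ⟨w, hw, rfl⟩ huw⟩

namespace MinimalListObstruction

lemma exists_adj_mem (h : MinimalListObstruction G L) (hx : L x = {α}) :
    ∃ z, G.Adj x z ∧ α ∈ L z := by
  by_contra! hα
  apply h.1
  have hL : eraseOnNeighbors G L x α = L := funext fun v => eraseOnNeighbors_eq_self (hα v)
  rw [← Set.union_compl_self {x}, ← Set.insert_eq, listColorableOn_insert_iff hx (by simp), hL]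
  exact h.2 _ (by simp)

lemma eq_or_eq_of_adj (h : MinimalListObstruction G L) {z : V} (hxz : G.Adj x z)
    (hx : L x = {α}) (hz : L z = {α}) (v : V) : v = x ∨ v = z := by
  by_contra! hv
  obtain ⟨c, hcL, hc⟩ := h.2 {x, z} fun huniv => by
    simpa [hv] using (huniv ▸ Set.mem_univ v : v ∈ ({x, z} : Set V))
  have hcx : c x = α := by simpa [hx] using hcL x (by simp)
  have hcz : c z = α := by simpa [hz] using hcL z (by simp)
  exact hc x (by simp) z (by simp) hxz (hcx.trans hcz.symm)

lemma induce_compl_singleton (h : MinimalListObstruction G L) (hx : L x = {α}) :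
    MinimalListObstruction (G.induce {x}ᶜ) (fun v => eraseOnNeighbors G L x α v) := by
  constructor
  · rw [listColorableOn_induce_iff, Set.image_univ, Subtype.range_coe,
      ← listColorableOn_insert_iff hx (by simp), Set.insert_eq, Set.union_compl_self]
    exact h.1
  · intro T hT
    obtain ⟨w, hw⟩ := (Set.ne_univ_iff_exists_notMem T).1 hT
    rw [listColorableOn_induce_iff, ← listColorableOn_insert_iff hx (by simp)]
    refine h.2 _ fun huniv => ?_
    have : (w : V) ∈ insert x (Subtype.val '' T) := huniv ▸ Set.mem_univ _
    rcases this with hwx | ⟨w', hw', hww'⟩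
    · exact w.2 hwx
    · exact hw (Subtype.val_injective hww' ▸ hw')

end MinimalListObstruction

namespace SimpleGraph.Walk

variable [DecidableEq V]

lemma isHamiltonian_cons_nil {z : V} (hxz : G.Adj x z) (hV : ∀ v, v = x ∨ v = z) :
    (cons hxz nil).IsHamiltonian :=
  (IsPath.nil.cons (by simpa using hxz.ne)).isHamiltonian_of_mem fun v => by
    rcases hV v with rfl | rfl <;> simp

lemma IsHamiltonian.cons_map_induce_compl_singleton {z y : ({x}ᶜ : Set V)}
    {p : (G.induce {x}ᶜ).Walk z y} (hp : p.IsHamiltonian) (hxz : G.Adj x z) :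
    (cons hxz (p.map (Embedding.induce _).toHom)).IsHamiltonian := by
  have hpath := hp.isPath.map (f := (Embedding.induce _).toHom) Subtype.val_injective
  refine (hpath.cons ?_).isHamiltonian_of_mem fun v => ?_
  · rw [support_map]
    simp
  · by_cases hv : v = x
    · simp [hv]
    · refine List.mem_cons_of_mem _ ?_
      rw [support_map]
      exact List.mem_map_of_mem (hp.mem_support ⟨v, hv⟩)

end SimpleGraph.Walk

theorem MinimalListObstruction.exists_isHamiltonian_walk [Finite V] [DecidableEq V]
    (h : MinimalListObstruction G L) (hsize : ∀ v, (L v).card ≤ 2) {y : V} (hxy : x ≠ y)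
    {β : ℕ} (hx : L x = {α}) (hy : L y = {β}) : ∃ p : G.Walk x y, p.IsHamiltonian := by
  induction hn : Nat.card V using Nat.strong_induction_on generalizing V α with
  | _ n ih =>
  by_cases hA : ∃ z, G.Adj x z ∧ L z = {α}
  · obtain ⟨z, hxz, hz⟩ := hA
    have hV := h.eq_or_eq_of_adj hxz hx hz
    obtain rfl : y = z := (hV y).resolve_left hxy.symm
    exact ⟨_, Walk.isHamiltonian_cons_nil hxz hV⟩
  push Not at hA
  obtain ⟨z, hxz, hαz⟩ := h.exists_adj_mem hx
  obtain ⟨γ, hγ⟩ : ∃ γ, eraseOnNeighbors G L x α z = {γ} := by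
    have hnt : (L z).Nontrivial := (Finset.nontrivial_iff_ne_singleton hαz).2 (hA z hxz)
    have hcard : ((L z).erase α).card ≤ 1 := by
      rw [Finset.card_erase_of_mem hαz]
      have := hsize z
      omega
    rw [eraseOnNeighbors_of_adj hxz]
    exact Finset.card_eq_one.1 (le_antisymm hcard hnt.erase_nonempty.card_pos)
  have hzy : z ≠ y := by
    rintro rfl
    rw [hy, Finset.mem_singleton] at hαz
    exact hA z hxz (hαz ▸ hy)
  have hy' : eraseOnNeighbors G L x α y = {β} := by
    refine (eraseOnNeighbors_eq_self fun hxy hαy => hA y hxy ?_).trans hy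
    rw [hy, Finset.mem_singleton] at hαy
    exact hαy ▸ hy
  obtain ⟨p, hp⟩ := ih _ (hn ▸ Finite.card_subtype_lt (x := x) (by simp))
    (h.induce_compl_singleton hx)
    (fun v => card_eraseOnNeighbors_le v.1 |>.trans (hsize v)) (x := ⟨z, hxz.ne'⟩)
    (y := ⟨y, hxy.symm⟩) (fun h => hzy (congrArg Subtype.val h)) hγ hy' rfl
  exact ⟨_, hp.cons_map_induce_compl_singleton hxz⟩

end

theorem stmt_16_general {V : Type*} [Fintype V] [DecidableEq V] (G : SimpleGraph V) (L : V → Finset ℕ)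
    (hsize : ∀ v, (L v).card ≤ 2)
    (hmin : MinimalListObstruction G L)
    (x y : V) (hxy : x ≠ y) (α β : ℕ) (hx : L x = {α}) (hy : L y = {β}) :
    ∃ p : G.Walk x y, p.IsHamiltonian :=
  hmin.exists_isHamiltonian_walk hsize hxy hx hy

theorem stmt_16 {V : Type*} [Fintype V] [DecidableEq V] (G : SimpleGraph V) (L : V → Finset ℕ)
    (hsub : ∀ v, L v ⊆ ({1, 2, 3} : Finset ℕ)) (hsize : ∀ v, (L v).card ≤ 2)
    (hne : ∀ v, (L v).Nonempty)
    (hmin : MinimalListObstruction G L)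
    (x y : V) (hxy : x ≠ y) (α β : ℕ) (hx : L x = {α}) (hy : L y = {β})
    (hV1 : {v : V | (L v).card = 1} = {x, y}) :
    ∃ p : G.Walk x y, p.IsHamiltonian :=
  stmt_16_general G L hsize hmin x y hxy α β hx hy
end

section
/- Let (G,L) be a minimal list-obstruction (lists are subsets of {1,2,3}), let R be an induced subgraph of G, and let {L_1,…,L_m} be a refinement of L with respect to R. For each i, let (G_i, L_i) be a minimal list-obstruction induced by (G, L_i). Then V(G) = V(R) ∪ ⋃_{i=1}^m V(G_i). In particular, if each G_i satisfies |V(G_i) \ V(R)| ≤ k, then |V(G)| ≤ |V(R)| + k·m. -/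
/-! Deleting a vertex `v` outside `R` leaves `G` `L`-colourable. Restricted to `R`, that colouring
is matched by some member `L_i` of the refinement, and it is then an `L_i`-colouring of `G - v`;
so the obstruction `G_i` cannot avoid `v`. -/

section ListColoring

variable {V : Type*} {G : SimpleGraph V}

theorem ListColorableOn.mono {L : V → Finset ℕ} {S T : Set V} (hST : S ⊆ T)
    (h : ListColorableOn G L T) : ListColorableOn G L S := by
  obtain ⟨c, hcL, hcG⟩ := h
  exact ⟨c, fun v hv ↦ hcL v (hST hv), fun u hu w hw ↦ hcG u (hST hu) w (hST hw)⟩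

theorem MinimalListObstruction.listColorableOn_compl_singleton {L : V → Finset ℕ}
    (h : MinimalListObstruction G L) (v : V) : ListColorableOn G L {v}ᶜ :=
  h.2 _ (Set.compl_ne_univ.2 (Set.singleton_nonempty v))

theorem MinimalListObstructionOn.not_subset {L : V → Finset ℕ} {S T : Set V}
    (hS : MinimalListObstructionOn G L S) (hT : ListColorableOn G L T) : ¬ S ⊆ T :=
  fun hST ↦ hS.1 (hT.mono hST)

theorem ListColorableOn.exists_refinement {ι : Type*} {L : V → Finset ℕ} {R T : Set V}
    {Ls : ι → V → Finset ℕ} {RL : ι → Set V}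
    (hLs : ∀ i, ∀ v, v ∉ RL i → Ls i v = L v)
    (hcover : ∀ c : V → ℕ, (∀ v ∈ R, c v ∈ L v) →
      (∀ u ∈ R, ∀ w ∈ R, G.Adj u w → c u ≠ c w) → ∃ i, ∀ v ∈ RL i, c v ∈ Ls i v)
    (hRT : R ⊆ T) (h : ListColorableOn G L T) : ∃ i, ListColorableOn G (Ls i) T := by
  obtain ⟨c, hcL, hcG⟩ := h
  obtain ⟨i, hi⟩ := hcover c (fun v hv ↦ hcL v (hRT hv))
    (fun u hu w hw ↦ hcG u (hRT hu) w (hRT hw))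
  refine ⟨i, c, fun v hv ↦ ?_, hcG⟩
  by_cases hvi : v ∈ RL i
  · exact hi v hvi
  · exact hLs i v hvi ▸ hcL v hv

end ListColoring

theorem Set.ncard_union_iUnion_le {α ι : Type*} [Fintype ι] (R : Set α) (S : ι → Set α)
    {k : ℕ} (hk : ∀ i, (S i \ R).ncard ≤ k) :
    (R ∪ ⋃ i, S i).ncard ≤ R.ncard + k * Fintype.card ι := by
  rw [← Set.union_sdiff_self, Set.iUnion_sdiff]
  calc (R ∪ ⋃ i, S i \ R).ncard ≤ R.ncard + (⋃ i, S i \ R).ncard := Set.ncard_union_le _ _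
    _ ≤ R.ncard + ∑ i, (S i \ R).ncard := by grw [Set.ncard_iUnion_le_of_fintype]
    _ ≤ R.ncard + ∑ _i : ι, k := by grw [Finset.sum_le_sum fun i _ ↦ hk i]
    _ = R.ncard + k * Fintype.card ι := by simp [mul_comm]

theorem stmt_17_general {V : Type*} [Fintype V] (G : SimpleGraph V) (L : V → Finset ℕ)
    (hmin : MinimalListObstruction G L)
    (R : Set V) (m : ℕ) (Ls : Fin m → V → Finset ℕ) (RL : Fin m → Set V)
    -- `{Ls i}` is a refinement of `L` with respect to `R`:
    (h2a : ∀ i, ∀ v, v ∉ RL i → Ls i v = L v)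
    (h3 : ∀ c : V → ℕ, (∀ v ∈ R, c v ∈ L v) →
      (∀ u ∈ R, ∀ w ∈ R, G.Adj u w → c u ≠ c w) → ∃ i, ∀ v ∈ RL i, c v ∈ Ls i v)
    -- minimal list-obstructions induced by the `(G, Ls i)`:
    (S : Fin m → Set V) (hS : ∀ i, MinimalListObstructionOn G (Ls i) (S i)) :
    (Set.univ : Set V) = R ∪ ⋃ i, S i ∧
    ∀ k : ℕ, (∀ i, (S i \ R).ncard ≤ k) → Fintype.card V ≤ R.ncard + k * m := by
  have hcover : (Set.univ : Set V) = R ∪ ⋃ i, S i := by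
    refine (Set.eq_univ_of_forall fun v ↦ ?_).symm
    by_contra hv
    simp only [Set.mem_union, Set.mem_iUnion, not_or, not_exists] at hv
    obtain ⟨i, hi⟩ := (hmin.listColorableOn_compl_singleton v).exists_refinement h2a h3
      (Set.subset_compl_singleton_iff.2 hv.1)
    exact (hS i).not_subset hi (Set.subset_compl_singleton_iff.2 (hv.2 i))
  refine ⟨hcover, fun k hk ↦ ?_⟩
  have hcard := Set.ncard_union_iUnion_le R S hk
  rwa [← hcover, Set.ncard_univ, Nat.card_eq_fintype_card, Fintype.card_fin] at hcard

theorem stmt_17 {V : Type*} [Fintype V] (G : SimpleGraph V) (L : V → Finset ℕ)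
    (hmin : MinimalListObstruction G L)
    (R : Set V) (m : ℕ) (Ls : Fin m → V → Finset ℕ) (RL : Fin m → Set V)
    -- `{Ls i}` is a refinement of `L` with respect to `R`:
    (hRL : ∀ i, RL i ⊆ R)
    (h1 : ∀ i, ∀ v ∈ RL i, (Ls i v).card = 1)
    (h2a : ∀ i, ∀ v, v ∉ RL i → Ls i v = L v)
    (h2b : ∀ i, ∀ v ∈ RL i, Ls i v ⊆ L v)
    (h3 : ∀ c : V → ℕ, (∀ v ∈ R, c v ∈ L v) →
      (∀ u ∈ R, ∀ w ∈ R, G.Adj u w → c u ≠ c w) → ∃ i, ∀ v ∈ RL i, c v ∈ Ls i v)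
    -- minimal list-obstructions induced by the `(G, Ls i)`:
    (S : Fin m → Set V) (hS : ∀ i, MinimalListObstructionOn G (Ls i) (S i)) :
    (Set.univ : Set V) = R ∪ ⋃ i, S i ∧
    ∀ k : ℕ, (∀ i, (S i \ R).ncard ≤ k) → Fintype.card V ≤ R.ncard + k * m :=
  stmt_17_general G L hmin R m Ls RL h2a h3 S hS
end

section
/- Let (G,L) be a minimal list-obstruction with L(v) ⊆ {1,2,3} and |L(v)| ≤ 2 for all v, all lists nonempty, and suppose V_1 = {v : |L(v)| = 1} is empty. Fix any vertex x with L(x) = {1,2}. Then for each α ∈ {1,2} there exists a (not necessarily induced) path P^α starting at x such that: assigning color α to x and updating along P^α colors every vertex of P^α; some edge of G joins two vertices of P^α receiving the same color; and V(G) = V(P^1) ∪ V(P^2). -/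
/-- A path `v 0 - … - v n` in `G` starting at `x`, together with the coloring obtained
by giving `x` the color `α` and updating along the path (each next vertex, whose list
has size two, loses the color of the previous one), such that every vertex of the path
gets colored and some edge of `G` joins two path vertices receiving the same color. -/
structure UpdatePath {V : Type*} (G : SimpleGraph V) (L : V → Finset ℕ)
    (x : V) (α : ℕ) where
  n : ℕ
  v : Fin (n + 1) → V
  inj : Function.Injective v
  start : v 0 = x
  adj : ∀ i : Fin n, G.Adj (v i.castSucc) (v i.succ)
  c : Fin (n + 1) → ℕ
  cstart : c 0 = α
  upd : ∀ i : Fin n, c i.succ ∈ L (v i.succ) ∧ c i.castSucc ∈ L (v i.succ) ∧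
    c i.succ ≠ c i.castSucc
  bad : ∃ i j : Fin (n + 1), G.Adj (v i) (v j) ∧ c i = c j

/-!
Suppose no update path from `x` colored `α` has a monochromatic edge. Then updating is
consistent: a vertex reached along two update paths gets the same color on both. Indeed, if `P`
and `Q` reach `v` with different colors then, as `|L v| = 2`, `P` colors `v` as `Q` colors the
vertex `w` before `v`. Stepping from `v` to `w` after `P` (or, if `P` already passes through
`w`, reading off its color there, which differs since `P` has no monochromatic edge) reaches `w`
with a color different from `Q`'s, and we conclude by induction on `Q`. The reached vertices
therefore carry a well-defined coloring that no edge leaving them can obstruct, and gluing it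
to a coloring of the remaining vertices, which exists by minimality, colors `G`.

If `P¹` and `P²` missed a vertex, minimality would color their union; `x` gets color `1` or
`2`, and updating along the corresponding path reproduces this coloring, including on its
monochromatic edge.
-/

lemma Finset.eq_of_card_eq_two {β : Type*} [DecidableEq β] {s : Finset β} (hs : s.card = 2)
    {a b d : β} (ha : a ∈ s) (hb : b ∈ s) (hd : d ∈ s) (hba : b ≠ a) (hda : d ≠ a) : d = b := by
  obtain ⟨p, q, -, rfl⟩ := Finset.card_eq_two.mp hs
  simp only [Finset.mem_insert, Finset.mem_singleton] at ha hb hd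
  grind

lemma Finset.exists_ne_of_card_eq_two {β : Type*} {s : Finset β} (hs : s.card = 2) (a : β) :
    ∃ b ∈ s, b ≠ a :=
  (Finset.one_lt_card_iff_nontrivial.mp (by omega)).exists_ne a

lemma MinimalListObstruction.false_of_closed {V : Type*} {G : SimpleGraph V} {L : V → Finset ℕ}
    (hmin : MinimalListObstruction G L) {S : Set V} (hS : S.Nonempty) {f : V → ℕ}
    (hfL : ∀ v ∈ S, f v ∈ L v)
    (hclosed : ∀ u ∈ S, ∀ w, G.Adj u w → f u ∈ L w → w ∈ S ∧ f w ≠ f u) : False := by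
  classical
  obtain ⟨g, hgL, hg⟩ := hmin.2 Sᶜ fun h => (h ▸ Set.mem_univ hS.some : hS.some ∈ Sᶜ) hS.some_mem
  set c := S.piecewise f g
  have hcL : ∀ v, c v ∈ L v := fun v => by
    by_cases hv : v ∈ S
    · simpa [c, hv] using hfL v hv
    · simpa [c, hv] using hgL v hv
  have hcS : ∀ u ∈ S, ∀ w, G.Adj u w → c u ≠ c w := by
    intro u hu w hadj heq
    have hcu : c u = f u := Set.piecewise_eq_of_mem _ _ _ hu
    obtain ⟨hw, hne⟩ := hclosed u hu w hadj (hcu ▸ heq ▸ hcL w)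
    exact hne (by rw [← hcu, heq]; exact (Set.piecewise_eq_of_mem _ _ _ hw).symm)
  refine hmin.1 ⟨c, fun v _ => hcL v, fun u _ w _ hadj => ?_⟩
  by_cases hu : u ∈ S
  · exact hcS u hu w hadj
  by_cases hw : w ∈ S
  · exact (hcS w hw u hadj.symm).symm
  simpa [c, hu, hw] using hg u hu w hw hadj

section UpdateTrace

variable {V : Type*} (G : SimpleGraph V) (L : V → Finset ℕ) (x : V) (α : ℕ)

def UpdateStep (p q : V × ℕ) : Prop :=
  G.Adj p.1 q.1 ∧ q.2 ∈ L q.1 ∧ p.2 ∈ L q.1 ∧ q.2 ≠ p.2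

/-- The colored vertices of an update path from `x` colored `α`, most recently colored first. -/
inductive UpdateTrace : List (V × ℕ) → Prop
  | start : UpdateTrace [(x, α)]
  | step {l : List (V × ℕ)} {p q : V × ℕ} : UpdateTrace (p :: l) → UpdateStep G L p q →
      q.1 ∉ (p :: l).map Prod.fst → UpdateTrace (q :: p :: l)

def UpdateReachable (v : V) (γ : ℕ) : Prop :=
  ∃ l, UpdateTrace G L x α ((v, γ) :: l)

def HasMonochromaticEdge (l : List (V × ℕ)) : Prop :=
  ∃ p ∈ l, ∃ q ∈ l, G.Adj p.1 q.1 ∧ p.2 = q.2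

variable {G L x α}

namespace UpdateTrace

lemma snd_mem (hα : α ∈ L x) {l : List (V × ℕ)} (hl : UpdateTrace G L x α l) :
    ∀ p ∈ l, p.2 ∈ L p.1 := by
  induction hl with
  | start => simpa using hα
  | step _ hstep _ ih => exact List.forall_mem_cons.mpr ⟨hstep.2.1, ih⟩

lemma updateReachable {l : List (V × ℕ)} (hl : UpdateTrace G L x α l) :
    ∀ p ∈ l, UpdateReachable G L x α p.1 p.2 := by
  induction hl with
  | start => simpa using ⟨[], start⟩
  | step hl hstep hq ih => exact List.forall_mem_cons.mpr ⟨⟨_, hl.step hstep hq⟩, ih⟩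

lemma nodup_map_fst {l : List (V × ℕ)} (hl : UpdateTrace G L x α l) :
    (l.map Prod.fst).Nodup := by
  induction hl with
  | start => simp
  | step _ _ hq ih => exact List.nodup_cons.mpr ⟨hq, ih⟩

lemma start_mem {l : List (V × ℕ)} (hl : UpdateTrace G L x α l) : (x, α) ∈ l := by
  induction hl with
  | start => exact List.mem_singleton_self _
  | step _ _ _ ih => exact List.mem_cons_of_mem _ ih

lemma isChain_reverse {l : List (V × ℕ)} (hl : UpdateTrace G L x α l) :
    l.reverse.IsChain (UpdateStep G L) := by
  refine List.isChain_reverse.mpr ?_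
  induction hl with
  | start => exact List.isChain_singleton _
  | step _ hstep _ ih => exact ih.cons_cons hstep

lemma exists_reverse_eq {l : List (V × ℕ)} (hl : UpdateTrace G L x α l) :
    ∃ t, l.reverse = (x, α) :: t := by
  induction hl with
  | start => exact ⟨[], rfl⟩
  | step _ _ _ ih =>
    obtain ⟨t, ht⟩ := ih
    exact ⟨t ++ [_], by rw [List.reverse_cons, ht]; rfl⟩

lemma nonempty_updatePath {l : List (V × ℕ)} (hl : UpdateTrace G L x α l)
    (hmono : HasMonochromaticEdge G l) : Nonempty (UpdatePath G L x α) := by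
  obtain ⟨t, ht⟩ := hl.exists_reverse_eq
  have hchain := hl.isChain_reverse
  have hnodup : (((x, α) :: t).map Prod.fst).Nodup := by
    rw [← ht, List.map_reverse, List.nodup_reverse]; exact hl.nodup_map_fst
  rw [ht, List.isChain_iff_getElem] at hchain
  obtain ⟨p, hp, q, hq, hadj, hpq⟩ := hmono
  rw [← List.mem_reverse, ht, List.mem_iff_getElem] at hp hq
  obtain ⟨i, hi, rfl⟩ := hp
  obtain ⟨j, hj, rfl⟩ := hq
  exact ⟨{
    n := t.length
    v := fun k => (((x, α) :: t)[k]).1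
    inj := fun k k' h => Fin.ext <| (hnodup.of_map _).getElem_inj_iff.mp <|
      List.inj_on_of_nodup_map hnodup (List.getElem_mem _) (List.getElem_mem _) h
    start := rfl
    adj := fun k => (hchain k (by simp)).1
    c := fun k => (((x, α) :: t)[k]).2
    cstart := rfl
    upd := fun k => (hchain k (by simp)).2
    bad := ⟨⟨i, hi⟩, ⟨j, hj⟩, hadj, hpq⟩ }⟩

end UpdateTrace

namespace UpdateReachable

lemma mem (hα : α ∈ L x) {v : V} {γ : ℕ} (hv : UpdateReachable G L x α v γ) : γ ∈ L v := by
  obtain ⟨l, hl⟩ := hv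
  exact hl.snd_mem hα _ List.mem_cons_self

lemma eq_of_start {γ : ℕ} (hx : UpdateReachable G L x α x γ) : γ = α := by
  obtain ⟨l, hl⟩ := hx
  have := List.inj_on_of_nodup_map hl.nodup_map_fst hl.start_mem List.mem_cons_self rfl
  exact (Prod.ext_iff.mp this).2.symm

lemma exists_adj (h2 : ∀ v, (L v).card = 2)
    (hA : ∀ l, UpdateTrace G L x α l → ¬ HasMonochromaticEdge G l)
    {v u : V} {γ : ℕ} (hv : UpdateReachable G L x α v γ) (hadj : G.Adj v u) (hγ : γ ∈ L u) :
    ∃ δ ≠ γ, UpdateReachable G L x α u δ := by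
  obtain ⟨l, hl⟩ := hv
  by_cases hu : u ∈ ((v, γ) :: l).map Prod.fst
  · obtain ⟨p, hp, rfl⟩ := List.mem_map.mp hu
    refine ⟨p.2, fun heq => hA _ hl ⟨(v, γ), List.mem_cons_self, p, hp, hadj, heq.symm⟩, ?_⟩
    exact hl.updateReachable p hp
  · obtain ⟨δ, hδ, hne⟩ := Finset.exists_ne_of_card_eq_two (h2 u) γ
    exact ⟨δ, hne, _, hl.step ⟨hadj, hδ, hγ, hne⟩ hu⟩

lemma unique (h2 : ∀ v, (L v).card = 2) (hα : α ∈ L x)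
    (hA : ∀ l, UpdateTrace G L x α l → ¬ HasMonochromaticEdge G l)
    {v : V} {γ δ : ℕ} (hγ : UpdateReachable G L x α v γ) (hδ : UpdateReachable G L x α v δ) :
    γ = δ := by
  obtain ⟨l, hl⟩ := hδ
  generalize hlQ : (v, δ) :: l = lQ at hl
  induction hl generalizing v γ δ l with
  | start =>
    obtain ⟨⟨rfl, rfl⟩, -⟩ := List.cons_eq_cons.mp hlQ
    exact hγ.eq_of_start
  | @step _ p _ hQ hstep _ ih =>
    obtain ⟨hadj, hqL, hpL, hne⟩ := hstep
    obtain ⟨rfl, -⟩ := List.cons_eq_cons.mp hlQ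
    by_contra hγδ
    obtain rfl : γ = p.2 := Finset.eq_of_card_eq_two (h2 _) hqL hpL (hγ.mem hα) hne.symm hγδ
    obtain ⟨ε, hε, hw⟩ := hγ.exists_adj h2 hA hadj.symm (hQ.snd_mem hα _ List.mem_cons_self)
    exact hε (ih hw _ rfl)

end UpdateReachable

lemma UpdateTrace.exists_hasMonochromaticEdge (h2 : ∀ v, (L v).card = 2) (hα : α ∈ L x)
    (hmin : MinimalListObstruction G L) :
    ∃ l, UpdateTrace G L x α l ∧ HasMonochromaticEdge G l := by
  classical
  by_contra! hA
  set S := {v | ∃ γ, UpdateReachable G L x α v γ}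
  let f v := if h : v ∈ S then h.choose else 0
  have hf : ∀ v (hv : v ∈ S), UpdateReachable G L x α v (f v) := fun v hv => by
    simpa [f, hv] using hv.choose_spec
  refine hmin.false_of_closed (S := S) ⟨x, α, [], .start⟩ (fun v hv => (hf v hv).mem hα) ?_
  intro u hu w hadj hfu
  obtain ⟨δ, hne, hw⟩ := (hf u hu).exists_adj h2 hA hadj hfu
  exact ⟨⟨δ, hw⟩, (hf w ⟨δ, hw⟩).unique h2 hα hA hw ▸ hne⟩

end UpdateTrace

namespace UpdatePath

variable {V : Type*} {G : SimpleGraph V} {L : V → Finset ℕ} {x : V} {α : ℕ}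

lemma apply_v_eq_c (P : UpdatePath G L x α) (h2 : ∀ v, (L v).card = 2) {S : Set V} {c : V → ℕ}
    (hcL : ∀ v ∈ S, c v ∈ L v) (hc : ∀ u ∈ S, ∀ w ∈ S, G.Adj u w → c u ≠ c w)
    (hPS : Set.range P.v ⊆ S) (hcx : c x = α) (i : Fin (P.n + 1)) : c (P.v i) = P.c i := by
  induction i using Fin.induction with
  | zero => rw [P.start, P.cstart, hcx]
  | succ i ih =>
    obtain ⟨hsucc, hprev, hne⟩ := P.upd i
    have hcne : c (P.v i.succ) ≠ P.c i.castSucc :=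
      ih ▸ hc _ (hPS ⟨_, rfl⟩) _ (hPS ⟨_, rfl⟩) (P.adj i).symm
    exact Finset.eq_of_card_eq_two (h2 _) hprev hsucc (hcL _ (hPS ⟨_, rfl⟩)) hne hcne

lemma ne_of_listColoring (P : UpdatePath G L x α) (h2 : ∀ v, (L v).card = 2) {S : Set V}
    {c : V → ℕ} (hcL : ∀ v ∈ S, c v ∈ L v) (hc : ∀ u ∈ S, ∀ w ∈ S, G.Adj u w → c u ≠ c w)
    (hPS : Set.range P.v ⊆ S) : c x ≠ α := by
  intro hcx
  obtain ⟨i, j, hadj, hij⟩ := P.bad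
  refine hc _ (hPS ⟨i, rfl⟩) _ (hPS ⟨j, rfl⟩) hadj ?_
  rw [P.apply_v_eq_c h2 hcL hc hPS hcx, P.apply_v_eq_c h2 hcL hc hPS hcx, hij]

end UpdatePath

theorem stmt_18_general {V : Type*} (G : SimpleGraph V) (L : V → Finset ℕ)
    (hsize : ∀ v, (L v).card ≤ 2)
    (hne : ∀ v, (L v).Nonempty)
    (hmin : MinimalListObstruction G L)
    (hV1 : {v : V | (L v).card = 1} = ∅)
    (x : V) (hx : L x = {1, 2}) :
    ∃ P1 : UpdatePath G L x 1, ∃ P2 : UpdatePath G L x 2,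
      Set.range P1.v ∪ Set.range P2.v = Set.univ := by
  have h2 : ∀ v, (L v).card = 2 := fun v => by
    have := (hne v).card_pos
    have := hsize v
    have : (L v).card ≠ 1 := Set.eq_empty_iff_forall_notMem.mp hV1 v
    omega
  obtain ⟨l1, hl1, hmono1⟩ :=
    UpdateTrace.exists_hasMonochromaticEdge (x := x) (α := 1) h2 (by simp [hx]) hmin
  obtain ⟨l2, hl2, hmono2⟩ :=
    UpdateTrace.exists_hasMonochromaticEdge (x := x) (α := 2) h2 (by simp [hx]) hmin
  obtain ⟨P1⟩ := hl1.nonempty_updatePath hmono1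
  obtain ⟨P2⟩ := hl2.nonempty_updatePath hmono2
  refine ⟨P1, P2, ?_⟩
  by_contra hcover
  obtain ⟨c, hcL, hc⟩ := hmin.2 _ hcover
  have hcx : c x = 1 ∨ c x = 2 := by simpa [hx] using hcL x (.inl ⟨0, P1.start⟩)
  rcases hcx with hcx | hcx
  · exact P1.ne_of_listColoring h2 hcL hc Set.subset_union_left hcx
  · exact P2.ne_of_listColoring h2 hcL hc Set.subset_union_right hcx

theorem stmt_18 {V : Type*} [Fintype V] (G : SimpleGraph V) (L : V → Finset ℕ)
    (hsub : ∀ v, L v ⊆ ({1, 2, 3} : Finset ℕ)) (hsize : ∀ v, (L v).card ≤ 2)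
    (hne : ∀ v, (L v).Nonempty)
    (hmin : MinimalListObstruction G L)
    (hV1 : {v : V | (L v).card = 1} = ∅)
    (x : V) (hx : L x = {1, 2}) :
    ∃ P1 : UpdatePath G L x 1, ∃ P2 : UpdatePath G L x 2,
      Set.range P1.v ∪ Set.range P2.v = Set.univ :=
  stmt_18_general G L hsize hne hmin hV1 x hx
end
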